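/- arXiv:0911.0610 — 8 statements merged into one kernel-verified Lean document; each statement's English description precedes it below -/
import Mathlib

section
/- Let (S, 𝓑, μ) be a standard Borel space with a σ-finite measure μ, let G be a locally compact second-countable topological abelian group, and let 𝓖 = {φ_t}_{t∈G} be a nonsingular G-action on (S,μ). Then there exists ν₀ ∈ Λ(𝓖) whose support S_{ν₀} is maximal modulo μ: (i) for every ν ∈ Λ(𝓖), μ(S_ν \ S_{ν₀}) = 0; and (ii) if ν₁ ∈ Λ(𝓖) also satisfies μ(S_ν \ S_{ν₁}) = 0 for every ν ∈ Λ(𝓖), then μ(S_{ν₀} Δ S_{ν₁}) = 0. -/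
/-!
Finite invariant measures absolutely continuous with respect to `μ` are closed under countable
sums with summable positive weights, so the family is countably directed for `≪`. In such a family
an exhaustion argument works: amalgamate a sequence whose supports have `μ.toFinite`-measures
tending to the supremum; the resulting support has maximal measure, and since any other member
and it are dominated by a common member, no other support can stick out of it on a non-null set.
-/

open MeasureTheory
open scoped ENNReal NNReal

namespace MeasureTheory.Measure

variable {S : Type*} [MeasurableSpace S]

theorem measure_setOf_rnDeriv_pos_diff_eq_zero {μ ν ρ : Measure S}
    [ν.HaveLebesgueDecomposition μ] [ρ.HaveLebesgueDecomposition μ]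
    (hνμ : ν ≪ μ) (hρμ : ρ ≪ μ) (hνρ : ν ≪ ρ) :
    μ ({s | 0 < ν.rnDeriv μ s} \ {s | 0 < ρ.rnDeriv μ s}) = 0 := by
  have hν : ν {s | 0 < ρ.rnDeriv μ s}ᶜ = 0 := hνρ (rnDeriv_pos hρμ)
  rw [← withDensity_rnDeriv_eq ν μ hνμ,
    withDensity_apply_eq_zero (measurable_rnDeriv ν μ)] at hν
  simpa [pos_iff_ne_zero, Set.sdiff_eq] using hν

theorem exists_forall_measure_setOf_rnDeriv_pos_diff_eq_zero (μ : Measure S) [SFinite μ]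
    (P : Set (Measure S)) (hne : P.Nonempty) (hac : ∀ ν ∈ P, ν ≪ μ)
    (hdecomp : ∀ ν ∈ P, ν.HaveLebesgueDecomposition μ)
    (hdir : ∀ ν : ℕ → Measure S, (∀ n, ν n ∈ P) → ∃ ρ ∈ P, ∀ n, ν n ≪ ρ) :
    ∃ ν₀ ∈ P, ∀ ν ∈ P,
      μ ({s | 0 < ν.rnDeriv μ s} \ {s | 0 < ν₀.rnDeriv μ s}) = 0 := by
  set supp : Measure S → Set S := fun ν => {s | 0 < ν.rnDeriv μ s}
  have hsupp_diff : ∀ ν ∈ P, ∀ ρ ∈ P, ν ≪ ρ → μ (supp ν \ supp ρ) = 0 := by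
    intro ν hν ρ hρ hνρ
    have := hdecomp ν hν
    have := hdecomp ρ hρ
    exact measure_setOf_rnDeriv_pos_diff_eq_zero (hac ν hν) (hac ρ hρ) hνρ
  set μ' := μ.toFinite
  have hle_of_ac : ∀ ν ∈ P, ∀ ρ ∈ P, ν ≪ ρ → μ' (supp ν) ≤ μ' (supp ρ) := fun ν hν ρ hρ hνρ =>
    measure_mono_ae (ae_le_set.2 (toFinite_absolutelyContinuous μ (hsupp_diff ν hν ρ hρ hνρ)))
  set α := sSup ((fun ν => μ' (supp ν)) '' P)
  obtain ⟨u, -, hu, huP⟩ := exists_seq_tendsto_sSup (hne.image fun ν => μ' (supp ν))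
    (OrderTop.bddAbove _)
  choose ν hνP hνu using huP
  obtain ⟨ν₀, hν₀P, hν₀⟩ := hdir ν hνP
  have hα : α ≤ μ' (supp ν₀) :=
    le_of_tendsto' hu fun n => hνu n ▸ hle_of_ac _ (hνP n) _ hν₀P (hν₀ n)
  refine ⟨ν₀, hν₀P, fun ν hν => ?_⟩
  obtain ⟨ρ, hρP, hρ⟩ := hdir (fun n => if n = 0 then ν₀ else ν)
    (fun n => by split_ifs <;> assumption)
  have hunion : μ' (supp ν₀ ∪ supp ν) ≤ μ' (supp ν₀) :=
    calc μ' (supp ν₀ ∪ supp ν) ≤ μ' (supp ρ) := by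
          refine measure_mono_ae (ae_le_set.2 (toFinite_absolutelyContinuous μ ?_))
          rw [Set.union_sdiff_distrib]
          exact measure_union_null (hsupp_diff ν₀ hν₀P ρ hρP (by simpa using hρ 0))
            (hsupp_diff ν hν ρ hρP (by simpa using hρ 1))
      _ ≤ α := le_sSup ⟨ρ, hρP, rfl⟩
      _ ≤ μ' (supp ν₀) := hα
  have hsupp_meas : MeasurableSet (supp ν₀) :=
    measurableSet_lt measurable_const (measurable_rnDeriv ν₀ μ)
  refine absolutelyContinuous_toFinite μ ?_
  rw [← Set.union_sdiff_left, measure_sdiff Set.subset_union_left hsupp_meas.nullMeasurableSet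
    (measure_ne_top _ _)]
  exact tsub_eq_zero_of_le hunion

theorem exists_pos_isFiniteMeasure_sum_smul (ν : ℕ → Measure S) [∀ n, IsFiniteMeasure (ν n)] :
    ∃ c : ℕ → ℝ≥0, (∀ n, 0 < c n) ∧ IsFiniteMeasure (sum fun n => c n • ν n) := by
  obtain ⟨c, hc, hsum⟩ := ENNReal.exists_pos_tsum_mul_lt_of_countable one_ne_zero
    (fun n => ν n Set.univ) (fun n => measure_ne_top _ _)
  refine ⟨c, hc, ⟨?_⟩⟩
  rw [sum_apply _ MeasurableSet.univ]
  simpa [mul_comm] using hsum.trans ENNReal.one_lt_top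

theorem exists_isFiniteMeasure_map_eq_self_absolutelyContinuous {ι : Type*} {μ : Measure S}
    {φ : ι → S → S} (hφ : ∀ t, Measurable (φ t)) (ν : ℕ → Measure S)
    [∀ n, IsFiniteMeasure (ν n)] (hνμ : ∀ n, ν n ≪ μ) (hinv : ∀ n t, (ν n).map (φ t) = ν n) :
    ∃ ρ : Measure S, IsFiniteMeasure ρ ∧ ρ ≪ μ ∧ (∀ t, ρ.map (φ t) = ρ) ∧ ∀ n, ν n ≪ ρ := by
  obtain ⟨c, hc, hfin⟩ := exists_pos_isFiniteMeasure_sum_smul ν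
  refine ⟨sum fun n => c n • ν n, hfin,
    absolutelyContinuous_sum_left fun n => (hνμ n).smul_left _, fun t => ?_, fun n => ?_⟩
  · simp only [map_sum (hφ t).aemeasurable, Measure.map_smul, hinv]
  · refine (absolutelyContinuous_smul (c := (c n : ℝ≥0∞)) ?_).trans
      (absolutelyContinuous_of_le (le_sum (fun n => c n • ν n) n))
    exact_mod_cast (hc n).ne'

end MeasureTheory.Measure

open Measure in
theorem stmt0_general
    {S : Type*} [MeasurableSpace S]
    (μ : Measure S) [SigmaFinite μ]
    {G : Type*}
    [MeasurableSpace G]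
    (φ : G → S → S)
    (hjoint : Measurable fun p : G × S => φ p.1 p.2) :
    ∃ ν₀ : Measure S, IsFiniteMeasure ν₀ ∧ ν₀ ≪ μ ∧ (∀ t, ν₀.map (φ t) = ν₀) ∧
      (∀ ν : Measure S, IsFiniteMeasure ν → ν ≪ μ → (∀ t, ν.map (φ t) = ν) →
        μ ({s | 0 < ν.rnDeriv μ s} \ {s | 0 < ν₀.rnDeriv μ s}) = 0) ∧
      (∀ ν₁ : Measure S, IsFiniteMeasure ν₁ → ν₁ ≪ μ → (∀ t, ν₁.map (φ t) = ν₁) →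
        (∀ ν : Measure S, IsFiniteMeasure ν → ν ≪ μ → (∀ t, ν.map (φ t) = ν) →
          μ ({s | 0 < ν.rnDeriv μ s} \ {s | 0 < ν₁.rnDeriv μ s}) = 0) →
        μ (symmDiff {s | 0 < ν₀.rnDeriv μ s} {s | 0 < ν₁.rnDeriv μ s}) = 0) := by
  have hφ : ∀ t, Measurable (φ t) := fun t => hjoint.comp (measurable_const.prodMk measurable_id)
  obtain ⟨ν₀, ⟨hfin, hac, hinv⟩, hmax⟩ := exists_forall_measure_setOf_rnDeriv_pos_diff_eq_zero μ
    {ν | IsFiniteMeasure ν ∧ ν ≪ μ ∧ ∀ t, ν.map (φ t) = ν}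
    ⟨0, inferInstance, AbsolutelyContinuous.zero μ, by simp⟩
    (fun _ hν => hν.2.1) (fun _ hν => have := hν.1; inferInstance)
    (fun ν hν => by
      have := fun n => (hν n).1
      obtain ⟨ρ, hfin, hac, hinv, hνρ⟩ := exists_isFiniteMeasure_map_eq_self_absolutelyContinuous hφ
        ν (fun n => (hν n).2.1) (fun n => (hν n).2.2)
      exact ⟨ρ, ⟨hfin, hac, hinv⟩, hνρ⟩)
  refine ⟨ν₀, hfin, hac, hinv, fun ν h₁ h₂ h₃ => hmax ν ⟨h₁, h₂, h₃⟩,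
    fun ν₁ h₁ h₂ h₃ hmax₁ => ?_⟩
  rw [Set.symmDiff_def]
  exact measure_union_null (hmax₁ ν₀ hfin hac hinv) (hmax ν₁ ⟨h₁, h₂, h₃⟩)

/-- For a nonsingular action of a locally compact second-countable abelian
group `G` on a standard Borel space `(S, μ)` with `μ` σ-finite, the family
`Λ(𝓖)` of finite `𝓖`-invariant measures absolutely continuous w.r.t. `μ` admits a member
`ν₀` whose support is maximal modulo `μ`, uniquely so modulo `μ`. -/
theorem stmt0
    {S : Type*} [MeasurableSpace S] [StandardBorelSpace S]
    (μ : Measure S) [SigmaFinite μ]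
    {G : Type*} [AddCommGroup G] [TopologicalSpace G] [IsTopologicalAddGroup G]
    [LocallyCompactSpace G] [SecondCountableTopology G]
    [MeasurableSpace G] [BorelSpace G]
    (φ : G → S → S)
    (hjoint : Measurable fun p : G × S => φ p.1 p.2)
    (hid : ∀ s, φ 0 s = s)
    (hcomp : ∀ u v s, φ (u + v) s = φ u (φ v s))
    (hns : ∀ t, μ.map (φ t) ≪ μ ∧ μ ≪ μ.map (φ t)) :
    ∃ ν₀ : Measure S, IsFiniteMeasure ν₀ ∧ ν₀ ≪ μ ∧ (∀ t, ν₀.map (φ t) = ν₀) ∧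
      (∀ ν : Measure S, IsFiniteMeasure ν → ν ≪ μ → (∀ t, ν.map (φ t) = ν) →
        μ ({s | 0 < ν.rnDeriv μ s} \ {s | 0 < ν₀.rnDeriv μ s}) = 0) ∧
      (∀ ν₁ : Measure S, IsFiniteMeasure ν₁ → ν₁ ≪ μ → (∀ t, ν₁.map (φ t) = ν₁) →
        (∀ ν : Measure S, IsFiniteMeasure ν → ν ≪ μ → (∀ t, ν.map (φ t) = ν) →
          μ ({s | 0 < ν.rnDeriv μ s} \ {s | 0 < ν₁.rnDeriv μ s}) = 0) →
        μ (symmDiff {s | 0 < ν₀.rnDeriv μ s} {s | 0 < ν₁.rnDeriv μ s}) = 0) :=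
  stmt0_general μ φ hjoint
end

section
/- Let (S, 𝓑, μ) be a standard Borel space with a σ-finite measure μ, let G be a locally compact second-countable topological abelian group, let 𝓖 = {φ_t}_{t∈G} be a nonsingular G-action on (S,μ), and let P_𝓖 be a maximal element of {S_ν : ν ∈ Λ(𝓖)} with N_𝓖 := S \ P_𝓖. Then P_𝓖 and N_𝓖 are invariant with respect to 𝓖: for every t ∈ G, μ(φ_t^{-1}(P_𝓖) Δ P_𝓖) = 0 and μ(φ_t^{-1}(N_𝓖) Δ N_𝓖) = 0. -/
/-!
`μ` restricted to `P = {dν₀/dμ > 0}` is absolutely continuous with respect to `ν₀`, while the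
`φ_t`-invariant measure `ν₀` gives no mass to `φ_t⁻¹(Pᶜ)`. Hence `P ⊆ φ_t⁻¹(P)` up to a `μ`-null
set for every `t`. Applying this to `-t` and transporting it by `φ_{-t}`, which preserves
`μ`-null sets, gives the reverse inclusion.
-/

open MeasureTheory

namespace MeasureTheory.Measure

variable {α : Type*} [MeasurableSpace α] {μ ν : Measure α}

lemma restrict_rnDeriv_pos_absolutelyContinuous :
    μ.restrict {x | 0 < ν.rnDeriv μ x} ≪ ν := by
  have hP : MeasurableSet {x | 0 < ν.rnDeriv μ x} :=
    measurableSet_lt measurable_const (measurable_rnDeriv ν μ)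
  have hpos : ∀ᵐ x ∂μ.restrict {x | 0 < ν.rnDeriv μ x}, ν.rnDeriv μ x ≠ 0 :=
    (ae_restrict_mem hP).mono fun x hx => hx.ne'
  refine (withDensity_absolutelyContinuous' (measurable_rnDeriv ν μ).aemeasurable hpos).trans ?_
  rw [← restrict_withDensity hP]
  exact absolutelyContinuous_of_le (restrict_le_self.trans (withDensity_rnDeriv_le ν μ))

lemma rnDeriv_pos_ae_le_preimage [HaveLebesgueDecomposition ν μ] {f : α → α}
    (hf : Measurable f) (hνf : ν.map f = ν) (hνμ : ν ≪ μ) :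
    {x | 0 < ν.rnDeriv μ x} ≤ᵐ[μ] f ⁻¹' {x | 0 < ν.rnDeriv μ x} := by
  have hP : MeasurableSet {x | 0 < ν.rnDeriv μ x} :=
    measurableSet_lt measurable_const (measurable_rnDeriv ν μ)
  have hν : ν (f ⁻¹' {x | 0 < ν.rnDeriv μ x}ᶜ) = 0 := by
    rw [← map_apply hf hP.compl, hνf]
    exact ae_iff.1 (rnDeriv_pos hνμ)
  rw [ae_le_set, Set.sdiff_eq_compl_inter, ← Set.preimage_compl, ← restrict_apply' hP]
  exact restrict_rnDeriv_pos_absolutelyContinuous hν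

end MeasureTheory.Measure

lemma preimage_ae_le_of_ae_le_preimage {α : Type*} [MeasurableSpace α] {μ : Measure α}
    {f g : α → α} {A : Set α} (hA : MeasurableSet A) (hf : Measurable f) (hg : Measurable g)
    (hfg : Function.LeftInverse f g) (hμg : μ ≪ μ.map g) (hAg : A ≤ᵐ[μ] g ⁻¹' A) :
    f ⁻¹' A ≤ᵐ[μ] A := by
  have hmap : ∀ᵐ y ∂μ.map g, y ∈ f ⁻¹' A → y ∈ A := by
    refine (ae_map_iff hg.aemeasurable ((hf hA).imp hA)).2 ?_
    filter_upwards [hAg] with x hx h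
    rw [hfg x] at h
    exact hx h
  exact hμg.ae_le hmap

theorem stmt1_general
    {S : Type*} [MeasurableSpace S]
    (μ : Measure S) [SigmaFinite μ]
    {G : Type*} [AddCommGroup G] [MeasurableSpace G]
    (φ : G → S → S)
    (hjoint : Measurable fun p : G × S => φ p.1 p.2)
    (hid : ∀ s, φ 0 s = s)
    (hcomp : ∀ u v s, φ (u + v) s = φ u (φ v s))
    (hns : ∀ t, μ.map (φ t) ≪ μ ∧ μ ≪ μ.map (φ t))
    (ν₀ : Measure S) [IsFiniteMeasure ν₀] (hν₀ac : ν₀ ≪ μ)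
    (hν₀inv : ∀ t, ν₀.map (φ t) = ν₀)
    (P : Set S) (hP : P = {s | 0 < ν₀.rnDeriv μ s}) :
    ∀ t, μ (symmDiff (φ t ⁻¹' P) P) = 0 ∧ μ (symmDiff (φ t ⁻¹' Pᶜ) Pᶜ) = 0 := by
  intro t
  have hφ (u : G) : Measurable (φ u) := hjoint.comp (measurable_const.prodMk measurable_id)
  have hPmeas : MeasurableSet P := hP ▸ measurableSet_lt measurable_const (ν₀.measurable_rnDeriv μ)
  have hP_le (u : G) : P ≤ᵐ[μ] φ u ⁻¹' P :=
    hP ▸ Measure.rnDeriv_pos_ae_le_preimage (hφ u) (hν₀inv u) hν₀ac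
  have hinv : Function.LeftInverse (φ t) (φ (-t)) := fun s => by
    rw [← hcomp, add_neg_cancel, hid]
  have hP_eq : φ t ⁻¹' P =ᵐ[μ] P :=
    (preimage_ae_le_of_ae_le_preimage hPmeas (hφ t) (hφ (-t)) hinv (hns (-t)).2
      (hP_le (-t))).antisymm (hP_le t)
  rw [Set.preimage_compl, measure_symmDiff_eq_zero_iff, measure_symmDiff_eq_zero_iff]
  exact ⟨hP_eq, hP_eq.compl⟩

/-- The maximal support `P_𝓖` (and its complement `N_𝓖`) of finite invariant
measures absolutely continuous w.r.t. `μ` are invariant under the nonsingular group action: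
`μ(φ_t⁻¹(P_𝓖) Δ P_𝓖) = 0` and `μ(φ_t⁻¹(N_𝓖) Δ N_𝓖) = 0` for all `t ∈ G`. -/
theorem stmt1
    {S : Type*} [MeasurableSpace S] [StandardBorelSpace S]
    (μ : Measure S) [SigmaFinite μ]
    {G : Type*} [AddCommGroup G] [TopologicalSpace G] [IsTopologicalAddGroup G]
    [LocallyCompactSpace G] [SecondCountableTopology G]
    [MeasurableSpace G] [BorelSpace G]
    (φ : G → S → S)
    (hjoint : Measurable fun p : G × S => φ p.1 p.2)
    (hid : ∀ s, φ 0 s = s)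
    (hcomp : ∀ u v s, φ (u + v) s = φ u (φ v s))
    (hns : ∀ t, μ.map (φ t) ≪ μ ∧ μ ≪ μ.map (φ t))
    (ν₀ : Measure S) [IsFiniteMeasure ν₀] (hν₀ac : ν₀ ≪ μ)
    (hν₀inv : ∀ t, ν₀.map (φ t) = ν₀)
    (P : Set S) (hP : P = {s | 0 < ν₀.rnDeriv μ s})
    (hmax : ∀ ν : Measure S, IsFiniteMeasure ν → ν ≪ μ → (∀ t, ν.map (φ t) = ν) →
      μ ({s | 0 < ν.rnDeriv μ s} \ P) = 0) :
    ∀ t, μ (symmDiff (φ t ⁻¹' P) P) = 0 ∧ μ (symmDiff (φ t ⁻¹' Pᶜ) Pᶜ) = 0 :=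
  stmt1_general μ φ hjoint hid hcomp hns ν₀ hν₀ac hν₀inv P hP
end

section
/- Let (S, 𝓑, μ) be a standard Borel space with a σ-finite measure μ, let G be a locally compact second-countable topological abelian group, let 𝓖 = {φ_t}_{t∈G} be a nonsingular G-action on (S,μ), and let P_𝓖 be a maximal element of {S_ν : ν ∈ Λ(𝓖)}. Then for every f ∈ L¹(S,μ) with f(s) > 0 for μ-a.e. s, and for every sequence (u_n)_{n∈ℕ} in G, one has Σ_{n=1}^∞ (φ̂_{u_n} f)(s) = ∞ for μ-a.e. s ∈ P_𝓖. -/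
/-!
Let `h = dν₀/dμ` and `w_t = d(μ∘φ_t⁻¹)/dμ`. Invariance of `ν₀` gives the cocycle identity
`w_t · (h ∘ φ_{-t}) = h`, so on `P = {h > 0}` the `n`-th term of the series equals
`h(s) · g(φ_{-u_n} s)` with `g = f / h`. Since `g > 0` `ν₀`-a.e. and every `φ_{-u_n}` preserves
the finite measure `ν₀`, the set where `∑ g ∘ φ_{-u_n}` converges has `ν₀`-measure at most
`ν₀ {g ≤ r}` for every `r > 0`, hence is `ν₀`-null; on `{h > 0}` this transfers to `μ`.
-/

open MeasureTheory Filter Set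
open scoped ENNReal Topology

section Divergence

variable {α : Type*} [MeasurableSpace α] {ν : Measure α} {T : ℕ → α → α}

theorem measure_tsum_comp_ne_top_le (hT : ∀ n, MeasurePreserving (T n) ν ν)
    (g : α → ℝ≥0∞) {r : ℝ≥0∞} (hr : 0 < r) :
    ν {x | ∑' n, g (T n x) ≠ ⊤} ≤ ν {x | g x ≤ r} := by
  set A : ℕ → Set α := fun N => ⋂ n ≥ N, T n ⁻¹' {x | g x ≤ r}
  have hsub : {x | ∑' n, g (T n x) ≠ ⊤} ⊆ ⋃ N, A N := by
    intro x hx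
    obtain ⟨N, hN⟩ := eventually_atTop.1
      ((ENNReal.tendsto_atTop_zero_of_tsum_ne_top hx).eventually_le_const hr)
    exact mem_iUnion.2 ⟨N, mem_iInter₂.2 hN⟩
  have hA : Monotone A := fun a b hab x hx =>
    mem_iInter₂.2 fun n hn => mem_iInter₂.1 hx n (hab.trans hn)
  calc ν {x | ∑' n, g (T n x) ≠ ⊤} ≤ ν (⋃ N, A N) := measure_mono hsub
    _ = ⨆ N, ν (A N) := hA.measure_iUnion
    _ ≤ ν {x | g x ≤ r} := iSup_le fun N =>
      calc ν (A N) ≤ ν (T N ⁻¹' {x | g x ≤ r}) := measure_mono (iInter₂_subset N le_rfl)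
        _ ≤ ν.map (T N) {x | g x ≤ r} := Measure.le_map_apply (hT N).aemeasurable _
        _ = ν {x | g x ≤ r} := by rw [(hT N).map_eq]

theorem ae_tsum_comp_eq_top [IsFiniteMeasure ν] (hT : ∀ n, MeasurePreserving (T n) ν ν)
    {g : α → ℝ≥0∞} (hg : AEMeasurable g ν) (hpos : ∀ᵐ x ∂ν, g x ≠ 0) :
    ∀ᵐ x ∂ν, ∑' n, g (T n x) = ⊤ := by
  have hset : ⋂ r > 0, {x | g x ≤ r} = {x | g x = 0} := by
    ext x
    simp only [mem_iInter, mem_ofPred_eq]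
    exact ⟨fun h => nonpos_iff_eq_zero.1 (le_of_forall_gt_imp_ge_of_dense h),
      fun h r _ => h ▸ zero_le⟩
  have hlim : Tendsto (fun r => ν {x | g x ≤ r}) (𝓝[>] 0) (𝓝 (ν {x | g x = 0})) := by
    rw [← hset]
    exact tendsto_measure_biInter_gt (fun r _ => hg.nullMeasurable measurableSet_Iic)
      (fun i j _ hij x hx => le_trans hx hij) ⟨1, one_pos, measure_ne_top _ _⟩
  have hzero : ν {x | g x = 0} = 0 := by simpa using ae_iff.1 hpos
  rw [ae_iff, ← nonpos_iff_eq_zero, ← hzero]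
  exact ge_of_tendsto hlim (eventually_nhdsWithin_of_forall fun r hr =>
    by simpa using measure_tsum_comp_ne_top_le hT g hr)

end Divergence

theorem MeasurableEquiv.map_withDensity {α β : Type*} [MeasurableSpace α] [MeasurableSpace β]
    (e : α ≃ᵐ β) (μ : Measure α) (f : α → ℝ≥0∞) :
    (μ.withDensity f).map e = (μ.map e).withDensity (f ∘ e.symm) := by
  ext s hs
  rw [e.map_apply, withDensity_apply _ (e.measurable hs), withDensity_apply _ hs, e.restrict_map,
    lintegral_map_equiv]
  simp

theorem rnDeriv_map_mul_rnDeriv_symm_ae_eq {α : Type*} [MeasurableSpace α] {μ ν : Measure α}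
    [SigmaFinite μ] [ν.HaveLebesgueDecomposition μ] (e : α ≃ᵐ α) (hμe : μ.map e ≪ μ)
    (hν : ν ≪ μ) (hνe : ν.map e = ν) :
    ∀ᵐ x ∂μ, (μ.map e).rnDeriv μ x * ν.rnDeriv μ (e.symm x) = ν.rnDeriv μ x := by
  have := e.sigmaFinite_map (μ := μ)
  have hm : Measurable (ν.rnDeriv μ ∘ e.symm) :=
    (Measure.measurable_rnDeriv ν μ).comp e.symm.measurable
  have hdens : μ.withDensity ((μ.map e).rnDeriv μ * (ν.rnDeriv μ ∘ e.symm)) = ν := by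
    rw [withDensity_mul _ (Measure.measurable_rnDeriv _ _) hm,
      Measure.withDensity_rnDeriv_eq _ _ hμe, ← e.map_withDensity,
      Measure.withDensity_rnDeriv_eq _ _ hν, hνe]
  have := Measure.rnDeriv_withDensity μ ((Measure.measurable_rnDeriv (μ.map e) μ).mul hm)
  rw [hdens] at this
  filter_upwards [this] with x hx using hx.symm

def addActionMeasurableEquiv {S G : Type*} [MeasurableSpace S] [AddGroup G] (φ : G → S → S)
    (hφ : ∀ t, Measurable (φ t)) (hid : ∀ s, φ 0 s = s)
    (hcomp : ∀ u v s, φ (u + v) s = φ u (φ v s)) (t : G) : S ≃ᵐ S where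
  toFun := φ t
  invFun := φ (-t)
  left_inv s := by rw [← hcomp, neg_add_cancel, hid]
  right_inv s := by rw [← hcomp, add_neg_cancel, hid]
  measurable_toFun := hφ t
  measurable_invFun := hφ (-t)

theorem stmt2_general
    {S : Type*} [MeasurableSpace S]
    (μ : Measure S) [SigmaFinite μ]
    {G : Type*} [AddCommGroup G]
    [MeasurableSpace G]
    (φ : G → S → S)
    (hjoint : Measurable fun p : G × S => φ p.1 p.2)
    (hid : ∀ s, φ 0 s = s)
    (hcomp : ∀ u v s, φ (u + v) s = φ u (φ v s))
    (hns : ∀ t, μ.map (φ t) ≪ μ ∧ μ ≪ μ.map (φ t))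
    (ν₀ : Measure S) [IsFiniteMeasure ν₀] (hν₀ac : ν₀ ≪ μ)
    (hν₀inv : ∀ t, ν₀.map (φ t) = ν₀)
    (P : Set S) (hP : P = {s | 0 < ν₀.rnDeriv μ s})
    (f : S → ℝ) (hf : Integrable f μ) (hfpos : ∀ᵐ s ∂μ, 0 < f s) :
    ∀ u : ℕ → G, ∀ᵐ s ∂μ, s ∈ P →
      (∑' n : ℕ, ((μ.map (φ (u n))).rnDeriv μ s) * ENNReal.ofReal (f (φ (-(u n)) s))) = ⊤ := by
  intro u
  have hφ : ∀ t, Measurable (φ t) := fun t =>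
    hjoint.comp (measurable_const.prodMk measurable_id)
  set h := ν₀.rnDeriv μ
  set g : S → ℝ≥0∞ := fun x => ENNReal.ofReal (f x) / h x
  have hdiv : ∀ᵐ s ∂ν₀, ∑' n, g (φ (-u n) s) = ⊤ := by
    have hg : AEMeasurable g μ :=
      hf.1.aemeasurable.ennreal_ofReal.div (Measure.measurable_rnDeriv _ _).aemeasurable
    refine ae_tsum_comp_eq_top (fun n => ⟨hφ _, hν₀inv _⟩) (hg.mono_ac hν₀ac) ?_
    filter_upwards [hν₀ac.ae_le hfpos, hν₀ac.ae_le (Measure.rnDeriv_lt_top ν₀ μ)] with x hfx hhx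
    exact (ENNReal.div_pos (ENNReal.ofReal_pos.2 hfx).ne' hhx.ne).ne'
  have hterm : ∀ n, ∀ᵐ s ∂μ, h s ≠ 0 →
      (μ.map (φ (u n))).rnDeriv μ s * ENNReal.ofReal (f (φ (-u n) s)) =
        h s * g (φ (-u n) s) := by
    intro n
    have hqmp : Measure.QuasiMeasurePreserving (φ (-u n)) μ μ := ⟨hφ _, (hns _).1⟩
    filter_upwards [rnDeriv_map_mul_rnDeriv_symm_ae_eq
        (addActionMeasurableEquiv φ hφ hid hcomp (u n)) (hns _).1 hν₀ac (hν₀inv _),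
      hqmp.ae (Measure.rnDeriv_lt_top ν₀ μ)] with s hkey hfin hhs
    change (μ.map (φ (u n))).rnDeriv μ s * h (φ (-u n) s) = h s at hkey
    have hne : h (φ (-u n) s) ≠ 0 := fun h0 => hhs (by simp [← hkey, h0])
    rw [← hkey, mul_assoc, ENNReal.mul_div_cancel hne hfin.ne]
  filter_upwards [Measure.ae_rnDeriv_ne_zero_imp_of_ae μ hdiv, ae_all_iff.2 hterm]
    with s hsum hsn hsP
  rw [hP] at hsP
  rw [tsum_congr fun n => hsn n hsP.ne', ENNReal.tsum_mul_left, hsum hsP.ne',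
    ENNReal.mul_top hsP.ne']

/-- On the positive part `P_𝓖` (the maximal support of finite invariant measures
absolutely continuous w.r.t. `μ`), for every strictly positive `f ∈ L¹(S,μ)` and every
sequence `(u_n)` in `G`, the series `Σ_n (φ̂_{u_n} f)(s)` diverges for `μ`-a.e. `s ∈ P_𝓖`,
where `(φ̂_u f)(s) = (d(μ∘φ_u⁻¹)/dμ)(s) · f(φ_u⁻¹(s)) = (d(μ∘φ_u⁻¹)/dμ)(s) · f(φ_{-u}(s))`. -/
theorem stmt2
    {S : Type*} [MeasurableSpace S] [StandardBorelSpace S]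
    (μ : Measure S) [SigmaFinite μ]
    {G : Type*} [AddCommGroup G] [TopologicalSpace G] [IsTopologicalAddGroup G]
    [LocallyCompactSpace G] [SecondCountableTopology G]
    [MeasurableSpace G] [BorelSpace G]
    (φ : G → S → S)
    (hjoint : Measurable fun p : G × S => φ p.1 p.2)
    (hid : ∀ s, φ 0 s = s)
    (hcomp : ∀ u v s, φ (u + v) s = φ u (φ v s))
    (hns : ∀ t, μ.map (φ t) ≪ μ ∧ μ ≪ μ.map (φ t))
    (ν₀ : Measure S) [IsFiniteMeasure ν₀] (hν₀ac : ν₀ ≪ μ)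
    (hν₀inv : ∀ t, ν₀.map (φ t) = ν₀)
    (P : Set S) (hP : P = {s | 0 < ν₀.rnDeriv μ s})
    (hmax : ∀ ν : Measure S, IsFiniteMeasure ν → ν ≪ μ → (∀ t, ν.map (φ t) = ν) →
      μ ({s | 0 < ν.rnDeriv μ s} \ P) = 0)
    (f : S → ℝ) (hf : Integrable f μ) (hfpos : ∀ᵐ s ∂μ, 0 < f s) :
    ∀ u : ℕ → G, ∀ᵐ s ∂μ, s ∈ P →
      (∑' n : ℕ, ((μ.map (φ (u n))).rnDeriv μ s) * ENNReal.ofReal (f (φ (-(u n)) s))) = ⊤ :=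
  stmt2_general μ φ hjoint hid hcomp hns ν₀ hν₀ac hν₀inv P hP f hf hfpos
end

section
/- Let (S, 𝓑, μ) be a standard Borel space with a σ-finite measure μ, let G be a locally compact second-countable topological abelian group, let 𝓖 = {φ_t}_{t∈G} be a nonsingular G-action on (S,μ), and let P_𝓖 be a maximal element of {S_ν : ν ∈ Λ(𝓖)}. Then P_𝓖 contains no weakly wandering set of positive measure: every measurable W ⊆ P_𝓖 that is weakly wandering with respect to 𝓖 satisfies μ(W) = 0. -/
/-!
A finite invariant measure `ν₀` gives every translate `φ (t n) ⁻¹' W` of a weakly wandering set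
the same mass, and these translates are almost disjoint, so infinitely many copies of `ν₀ W` fit
into the finite total mass: `ν₀ W = 0`. On `P` the density of `ν₀` with respect to `μ` is
positive, so `μ W = 0` as well.
-/

open MeasureTheory

namespace MeasureTheory

variable {α : Type*} [MeasurableSpace α]

lemma eq_zero_of_pairwise_aedisjoint_of_measure_eq {ν : Measure α} [IsFiniteMeasure ν]
    {s : ℕ → Set α} {c : ENNReal} (hs : ∀ n, NullMeasurableSet (s n) ν)
    (hd : Pairwise (Function.onFun (AEDisjoint ν) s)) (hc : ∀ n, ν (s n) = c) : c = 0 := by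
  by_contra h
  have hunion : ν (⋃ n, s n) = ⊤ := by
    rw [measure_iUnion₀ hd hs, tsum_congr hc]
    exact ENNReal.tsum_const_eq_top_of_ne_zero h
  exact measure_ne_top ν _ hunion

lemma measure_eq_zero_of_weaklyWandering {ι : Type*} {φ : ι → α → α}
    (hφ : ∀ i, Measurable (φ i)) {ν : Measure α} [IsFiniteMeasure ν]
    (hinv : ∀ i, ν.map (φ i) = ν) {W : Set α} (hW : MeasurableSet W) {t : ℕ → ι}
    (ht : Pairwise fun n m => ν (φ (t n) ⁻¹' W ∩ φ (t m) ⁻¹' W) = 0) : ν W = 0 := by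
  refine eq_zero_of_pairwise_aedisjoint_of_measure_eq (s := fun n => φ (t n) ⁻¹' W)
    (fun n => (hφ (t n) hW).nullMeasurableSet) ht fun n => ?_
  rw [← Measure.map_apply (hφ (t n)) hW, hinv]

lemma Measure.measure_eq_zero_of_subset_rnDeriv_pos {μ ν : Measure α}
    [ν.HaveLebesgueDecomposition μ] (hνμ : ν ≪ μ) {W : Set α}
    (hW : W ⊆ {x | 0 < ν.rnDeriv μ x}) (hνW : ν W = 0) : μ W = 0 := by
  rw [← Measure.withDensity_rnDeriv_eq ν μ hνμ,
    withDensity_apply_eq_zero (Measure.measurable_rnDeriv ν μ)] at hνW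
  exact measure_mono_null (fun x hx => Set.mem_inter (hW hx).ne' hx) hνW

end MeasureTheory

theorem stmt4_general
    {S : Type*} [MeasurableSpace S]
    (μ : Measure S) [SigmaFinite μ]
    {G : Type*}
    [MeasurableSpace G]
    (φ : G → S → S)
    (hjoint : Measurable fun p : G × S => φ p.1 p.2)
    (ν₀ : Measure S) [IsFiniteMeasure ν₀] (hν₀ac : ν₀ ≪ μ)
    (hν₀inv : ∀ t, ν₀.map (φ t) = ν₀)
    (P : Set S) (hP : P = {s | 0 < ν₀.rnDeriv μ s}) :
    ∀ W : Set S, MeasurableSet W → W ⊆ P →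
      (∃ t : ℕ → G, ∀ n m, n ≠ m → μ (φ (t n) ⁻¹' W ∩ φ (t m) ⁻¹' W) = 0) →
      μ W = 0 := by
  rintro W hW hWP ⟨t, ht⟩
  have hφ : ∀ u, Measurable (φ u) := fun u => hjoint.comp (measurable_const.prodMk measurable_id)
  have hν₀W : ν₀ W = 0 :=
    measure_eq_zero_of_weaklyWandering hφ hν₀inv hW fun n m hnm => hν₀ac (ht n m hnm)
  exact Measure.measure_eq_zero_of_subset_rnDeriv_pos hν₀ac (hP ▸ hWP) hν₀W

/-- The positive part `P_𝓖` (the maximal support of finite invariant measures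
absolutely continuous w.r.t. `μ`) contains no weakly wandering measurable set of positive
measure. -/
theorem stmt4
    {S : Type*} [MeasurableSpace S] [StandardBorelSpace S]
    (μ : Measure S) [SigmaFinite μ]
    {G : Type*} [AddCommGroup G] [TopologicalSpace G] [IsTopologicalAddGroup G]
    [LocallyCompactSpace G] [SecondCountableTopology G]
    [MeasurableSpace G] [BorelSpace G]
    (φ : G → S → S)
    (hjoint : Measurable fun p : G × S => φ p.1 p.2)
    (hid : ∀ s, φ 0 s = s)
    (hcomp : ∀ u v s, φ (u + v) s = φ u (φ v s))
    (hns : ∀ t, μ.map (φ t) ≪ μ ∧ μ ≪ μ.map (φ t))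
    (ν₀ : Measure S) [IsFiniteMeasure ν₀] (hν₀ac : ν₀ ≪ μ)
    (hν₀inv : ∀ t, ν₀.map (φ t) = ν₀)
    (P : Set S) (hP : P = {s | 0 < ν₀.rnDeriv μ s})
    (hmax : ∀ ν : Measure S, IsFiniteMeasure ν → ν ≪ μ → (∀ t, ν.map (φ t) = ν) →
      μ ({s | 0 < ν.rnDeriv μ s} \ P) = 0) :
    ∀ W : Set S, MeasurableSet W → W ⊆ P →
      (∃ t : ℕ → G, ∀ n m, n ≠ m → μ (φ (t n) ⁻¹' W ∩ φ (t m) ⁻¹' W) = 0) →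
      μ W = 0 :=
  stmt4_general μ φ hjoint ν₀ hν₀ac hν₀inv P hP
end

section
/- Let (S, 𝓑, μ) be a standard Borel space with a σ-finite measure μ, let G be a locally compact second-countable topological abelian group, let 𝓖 = {φ_t}_{t∈G} be a nonsingular G-action on (S,μ), let P_𝓖 be a maximal element of {S_ν : ν ∈ Λ(𝓖)}, and set N_𝓖 := S \ P_𝓖. Then N_𝓖 is, modulo μ-null sets, a countable union of weakly wandering sets: there exist measurable sets W_k ⊆ S, k ∈ ℕ, each weakly wandering with respect to 𝓖, such that μ(N_𝓖 Δ ⋃_{k∈ℕ} W_k) = 0. -/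
/-!
An abelian group `G` carries an invariant mean `M` on its bounded real functions (Hahn–Banach,
dominated by `f ↦ inf_T sup_s` of the averages of `f` over the translates `s + T`). Replace `μ` by
an equivalent finite measure `m`. Then `A ↦ M (t ↦ m (φ_t⁻¹ A))` is a finitely additive invariant
set function, and the largest measure below it is a finite invariant measure `ν ≪ μ`, so by
maximality of `P` it vanishes on `Pᶜ`.

Take a maximal countable family of weakly wandering subsets of `Pᶜ`. If the rest `R` of `Pᶜ` had
positive measure, then, since `ν R = 0`, `R` contains sets `B_k` of almost full measure whose
mean content is as small as we like. By Markov's inequality for `M`, we can choose `t_k`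
inductively with `m (φ_{t_k - t_i}⁻¹ B_k)` small for all `i < k`; removing these sets from
`⋂ B_k` leaves a weakly wandering subset of `R` of positive measure, a contradiction.
-/

open MeasureTheory
open scoped ENNReal BigOperators

section UpperMean

open Finset

variable {G : Type*} [AddCommGroup G] {ι κ : Type*} [Fintype ι] [Fintype κ]

lemma Memℓp.infty_comp {α β E : Type*} [NormedAddCommGroup E] {f : α → E} (hf : Memℓp f ∞)
    (g : β → α) : Memℓp (f ∘ g) ∞ :=
  memℓp_infty (hf.bddAbove.mono (Set.range_comp_subset_range g fun i => ‖f i‖))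

lemma Memℓp.exists_abs_le {α : Type*} {f : α → ℝ} (hf : Memℓp f ∞) : ∃ C, ∀ t, |f t| ≤ C :=
  let ⟨C, hC⟩ := hf.bddAbove
  ⟨C, fun t => hC ⟨t, rfl⟩⟩

noncomputable def supAvg (f : G → ℝ) (T : ι → G) : ℝ := ⨆ s, 𝔼 i, f (s + T i)

variable {f g : G → ℝ} {c C D : ℝ}

lemma expect_le_supAvg [Nonempty ι] (hf : ∀ t, f t ≤ C) (T : ι → G) (s : G) :
    𝔼 i, f (s + T i) ≤ supAvg f T :=
  le_ciSup (f := fun s => 𝔼 i, f (s + T i))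
    ⟨C, Set.forall_mem_range.2 fun _ => expect_le univ_nonempty fun _ _ => hf _⟩ s

lemma supAvg_le [Nonempty ι] (hf : ∀ t, f t ≤ C) (T : ι → G) : supAvg f T ≤ C :=
  ciSup_le fun _ => expect_le univ_nonempty fun _ _ => hf _

lemma le_supAvg [Nonempty ι] (hlo : ∀ t, c ≤ f t) (hhi : ∀ t, f t ≤ C) (T : ι → G) :
    c ≤ supAvg f T :=
  (le_expect univ_nonempty fun _ _ => hlo _).trans (expect_le_supAvg hhi T 0)

lemma supAvg_smul (hc : 0 ≤ c) (T : ι → G) : supAvg (c • f) T = c * supAvg f T := by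
  simp only [supAvg, Real.mul_iSup_of_nonneg hc, mul_expect, Pi.smul_apply, smul_eq_mul]

lemma supAvg_comp_equiv (e : κ ≃ ι) (T : ι → G) : supAvg f (T ∘ e) = supAvg f T := by
  unfold supAvg
  congr 1 with s
  exact Fintype.expect_equiv e (fun i => f (s + T (e i))) (fun i => f (s + T i)) fun _ => rfl

lemma supAvg_add_le [Nonempty ι] [Nonempty κ] (hf : ∀ t, f t ≤ C) (hg : ∀ t, g t ≤ D)
    (T : ι → G) (U : κ → G) :
    supAvg (f + g) (fun p : ι × κ => T p.1 + U p.2) ≤ supAvg f T + supAvg g U := by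
  refine ciSup_le fun s => ?_
  rw [← univ_product_univ, expect_product]
  simp only [Pi.add_apply, expect_add_distrib]
  rw [expect_comm (f := fun i j => f (s + (T i + U j)))]
  gcongr
  · refine expect_le univ_nonempty fun j _ => ?_
    simpa only [add_assoc, add_comm (T _) (U j)] using expect_le_supAvg hf T (s + U j)
  · refine expect_le univ_nonempty fun i _ => ?_
    simpa only [add_assoc] using expect_le_supAvg hg U (s + T i)

noncomputable def upperMean (f : G → ℝ) : ℝ := ⨅ T : Σ n : ℕ, Fin (n + 1) → G, supAvg f T.2

lemma upperMean_le_supAvg [Nonempty ι] (hf : Memℓp f ∞) (T : ι → G) :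
    upperMean f ≤ supAvg f T := by
  obtain ⟨C, hC⟩ := hf.exists_abs_le
  obtain ⟨n, hn⟩ := Nat.exists_eq_succ_of_ne_zero (Fintype.card_ne_zero (α := ι))
  let e : Fin (n + 1) ≃ ι := (finCongr hn.symm).trans (Fintype.equivFin ι).symm
  rw [← supAvg_comp_equiv e]
  have hbdd : BddBelow (Set.range fun T : Σ n : ℕ, Fin (n + 1) → G => supAvg f T.2) :=
    ⟨-C, Set.forall_mem_range.2 fun T =>
      le_supAvg (fun t => (abs_le.1 (hC t)).1) (fun t => (abs_le.1 (hC t)).2) T.2⟩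
  exact ciInf_le hbdd ⟨n, T ∘ e⟩

lemma upperMean_smul (hc : 0 ≤ c) (f : G → ℝ) : upperMean (c • f) = c * upperMean f := by
  simp only [upperMean, supAvg_smul hc, Real.mul_iInf_of_nonneg hc]

lemma upperMean_add_le (hf : Memℓp f ∞) (hg : Memℓp g ∞) :
    upperMean (f + g) ≤ upperMean f + upperMean g := by
  obtain ⟨C, hC⟩ := hf.exists_abs_le
  obtain ⟨D, hD⟩ := hg.exists_abs_le
  refine le_ciInf_add_ciInf fun T U => (upperMean_le_supAvg (hf.add hg)
    fun p : Fin (T.1 + 1) × Fin (U.1 + 1) => T.2 p.1 + U.2 p.2).trans ?_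
  exact supAvg_add_le (fun t => (abs_le.1 (hC t)).2) (fun t => (abs_le.1 (hD t)).2) _ _

lemma upperMean_le (hf : Memℓp f ∞) (h : ∀ t, f t ≤ c) : upperMean f ≤ c :=
  (upperMean_le_supAvg hf fun _ : Fin 1 => 0).trans (supAvg_le h _)

/-- Averaging along `0, a, …, (n-1)•a` telescopes, so the average is `O(1/n)`. -/
lemma upperMean_comp_add_sub_le (hf : Memℓp f ∞) (a : G) :
    upperMean (fun t => f (t + a) - f t) ≤ 0 := by
  obtain ⟨C, hC⟩ := hf.exists_abs_le
  refine ge_of_tendsto (tendsto_const_div_atTop_nhds_zero_nat (2 * C))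
    (Filter.eventually_atTop.2 ⟨1, fun n hn => ?_⟩)
  have : NeZero n := ⟨by omega⟩
  refine (upperMean_le_supAvg (f := fun t => f (t + a) - f t) ((hf.infty_comp (· + a)).sub hf)
    fun i : Fin n => (i : ℕ) • a).trans (ciSup_le fun s => ?_)
  have htel : ∑ i : Fin n, (f (s + (i : ℕ) • a + a) - f (s + (i : ℕ) • a))
      = f (s + n • a) - f (s + 0 • a) := by
    rw [Fin.sum_univ_eq_sum_range (fun i => f (s + i • a + a) - f (s + i • a)),
      ← Finset.sum_range_sub (fun i => f (s + i • a))]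
    simp only [succ_nsmul, add_assoc]
  rw [Fintype.expect_eq_sum_div_card, Fintype.card_fin, htel]
  gcongr
  linarith [(abs_le.1 (hC (s + n • a))).2, (abs_le.1 (hC (s + 0 • a))).1]

end UpperMean

section InvariantMean

variable {G : Type*} [AddCommGroup G]

variable (G) in
theorem exists_linearMap_le_upperMean :
    ∃ M : (G → ℝ) →ₗ[ℝ] ℝ, ∀ f, Memℓp f ∞ → M f ≤ upperMean f := by
  let E : Submodule ℝ (G → ℝ) := lpSubmodule ℝ (fun _ : G => ℝ) ∞
  have hzero : upperMean (0 : G → ℝ) = 0 := by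
    simpa using upperMean_smul le_rfl (0 : G → ℝ)
  obtain ⟨L, -, hL⟩ := exists_extension_of_le_sublinear (LinearMap.toPMap 0 ⊥)
    (fun x : E => upperMean (x : G → ℝ))
    (fun c hc x => by rw [Submodule.coe_smul]; exact upperMean_smul hc.le _)
    (fun x y => by rw [Submodule.coe_add]; exact upperMean_add_le x.2 y.2)
    (fun x => by
      change (0 : E →ₗ[ℝ] ℝ) x ≤ _
      rw [LinearMap.zero_apply, (Submodule.mem_bot ℝ).1 x.2]
      simp [hzero])
  obtain ⟨M, hM⟩ := LinearMap.exists_extend L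
  exact ⟨M, fun f hf => by simpa [← hM] using hL ⟨f, hf⟩⟩

structure IsInvariantMean (M : (G → ℝ) →ₗ[ℝ] ℝ) : Prop where
  map_nonneg {f : G → ℝ} : Memℓp f ∞ → 0 ≤ f → 0 ≤ M f
  map_one : M 1 = 1
  map_comp_add {f : G → ℝ} : Memℓp f ∞ → ∀ a, M (fun t => f (t + a)) = M f

variable (G) in
theorem exists_isInvariantMean : ∃ M : (G → ℝ) →ₗ[ℝ] ℝ, IsInvariantMean M := by
  obtain ⟨M, hM⟩ := exists_linearMap_le_upperMean G
  have hle {f : G → ℝ} (hf : Memℓp f ∞) {c : ℝ} (h : ∀ t, f t ≤ c) : M f ≤ c :=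
    (hM f hf).trans (upperMean_le hf h)
  refine ⟨M, ⟨fun {f} hf h0 => ?_, ?_, fun {f} hf a => ?_⟩⟩
  · have := hle hf.neg fun t => neg_nonpos.2 (h0 t)
    rwa [map_neg, neg_nonpos] at this
  · have h1 := hle (one_memℓp_infty (B := fun _ : G => ℝ)) (c := 1) fun _ => le_rfl
    have h2 := hle (one_memℓp_infty (B := fun _ : G => ℝ)).neg (c := -1) fun _ => le_rfl
    rw [map_neg] at h2
    linarith
  · have hfa : Memℓp (fun t => f (t + a)) ∞ := hf.infty_comp (· + a)
    have h1 := (hM _ (hfa.sub hf)).trans (upperMean_comp_add_sub_le hf a)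
    have h2 : M (f - fun t => f (t + a)) ≤ 0 := by
      have h := upperMean_comp_add_sub_le hfa (-a)
      simp only [neg_add_cancel_right] at h
      exact (hM _ (hf.sub hfa)).trans h
    rw [map_sub] at h1 h2
    linarith

variable {M : (G → ℝ) →ₗ[ℝ] ℝ}

lemma IsInvariantMean.mono (hM : IsInvariantMean M) {f g : G → ℝ} (hf : Memℓp f ∞)
    (hg : Memℓp g ∞) (h : f ≤ g) : M f ≤ M g := by
  have := hM.map_nonneg (hg.sub hf) (sub_nonneg.2 h)
  rwa [map_sub, sub_nonneg] at this

end InvariantMean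

section MeanContent

open Set

variable {G S : Type*} [MeasurableSpace S] {M : (G → ℝ) →ₗ[ℝ] ℝ} {m : Measure S}
  {φ : G → S → S} {A B : Set S}

noncomputable def meanContent (M : (G → ℝ) →ₗ[ℝ] ℝ) (m : Measure S) (φ : G → S → S)
    (A : Set S) : ℝ :=
  M fun t => m.real (φ t ⁻¹' A)

lemma meanContent_eq_zero (h : ∀ t, m (φ t ⁻¹' A) = 0) : meanContent M m φ A = 0 := by
  have : (fun t => m.real (φ t ⁻¹' A)) = 0 := funext fun t => by simp [Measure.real, h]
  rw [meanContent, this, map_zero]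

lemma meanContent_empty : meanContent M m φ ∅ = 0 :=
  meanContent_eq_zero fun _ => by simp

noncomputable def meanOuterMeasure (M : (G → ℝ) →ₗ[ℝ] ℝ) (m : Measure S)
    (φ : G → S → S) : OuterMeasure S :=
  inducedOuterMeasure (fun A (_ : MeasurableSet A) => ENNReal.ofReal (meanContent M m φ A))
    MeasurableSet.empty (by simp [meanContent_empty])

variable [IsFiniteMeasure m]

lemma memℓp_measureReal_preimage (m : Measure S) [IsFiniteMeasure m] (φ : G → S → S)
    (A : Set S) : Memℓp (fun t => m.real (φ t ⁻¹' A)) ∞ :=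
  memℓp_infty ⟨m.real univ, forall_mem_range.2 fun _ =>
    (Real.norm_of_nonneg measureReal_nonneg).trans_le (measureReal_mono (subset_univ _))⟩

lemma meanContent_inter_add_diff (hE : ∀ t, MeasurableSet (φ t ⁻¹' B)) :
    meanContent M m φ (A ∩ B) + meanContent M m φ (A \ B) = meanContent M m φ A := by
  simp only [meanContent, ← map_add]
  congr 1 with t
  simp only [Pi.add_apply, preimage_inter, preimage_sdiff]
  exact measureReal_inter_add_sdiff (hE t)

variable [AddCommGroup G]

lemma meanContent_nonneg (hM : IsInvariantMean M) : 0 ≤ meanContent M m φ A :=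
  hM.map_nonneg (memℓp_measureReal_preimage m φ A) fun _ => measureReal_nonneg

lemma meanContent_mono (hM : IsInvariantMean M) (h : A ⊆ B) :
    meanContent M m φ A ≤ meanContent M m φ B :=
  hM.mono (memℓp_measureReal_preimage m φ A) (memℓp_measureReal_preimage m φ B)
    fun _ => measureReal_mono (preimage_mono h)

lemma meanContent_biUnion_le (hM : IsInvariantMean M) {ι : Type*} (s : Finset ι)
    (C : ι → Set S) : meanContent M m φ (⋃ i ∈ s, C i) ≤ ∑ i ∈ s, meanContent M m φ (C i) := by
  simp only [meanContent]
  rw [← map_sum, Finset.sum_fn]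
  refine hM.mono (memℓp_measureReal_preimage m φ _)
    (Memℓp.finsetSum s fun i _ => memℓp_measureReal_preimage m φ (C i)) fun t => ?_
  simpa only [preimage_iUnion₂, Finset.sum_apply] using measureReal_biUnion_finset_le s _

lemma meanContent_preimage (hM : IsInvariantMean M)
    (hcomp : ∀ u v s, φ (u + v) s = φ u (φ v s)) (u : G) (A : Set S) :
    meanContent M m φ (φ u ⁻¹' A) = meanContent M m φ A := by
  have h : ∀ t, φ t ⁻¹' (φ u ⁻¹' A) = φ (t + u) ⁻¹' A := fun t => by
    ext s; simp [add_comm t u, hcomp]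
  simp only [meanContent, h]
  exact hM.map_comp_add (memℓp_measureReal_preimage m φ A) u

lemma le_meanOuterMeasure_caratheodory (hM : IsInvariantMean M) (hφ : ∀ t, Measurable (φ t)) :
    ‹MeasurableSpace S› ≤ (meanOuterMeasure M m φ).caratheodory := by
  intro B hB
  unfold meanOuterMeasure inducedOuterMeasure
  refine OuterMeasure.ofFunction_caratheodory fun A => ?_
  by_cases hA : MeasurableSet A
  · rw [extend_eq _ hA, extend_eq _ (hA.inter hB), extend_eq _ (hA.diff hB),
      ← ENNReal.ofReal_add (meanContent_nonneg hM) (meanContent_nonneg hM),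
      meanContent_inter_add_diff fun t => hφ t hB]
  · rw [extend_eq_top _ hA]
    exact le_top

noncomputable def meanMeasure (hM : IsInvariantMean M) (m : Measure S) [IsFiniteMeasure m]
    (hφ : ∀ t, Measurable (φ t)) : Measure S :=
  (meanOuterMeasure M m φ).toMeasure (le_meanOuterMeasure_caratheodory hM hφ)

variable (hM : IsInvariantMean M) (hφ : ∀ t, Measurable (φ t))
include hM hφ

lemma meanMeasure_apply_le (hA : MeasurableSet A) :
    meanMeasure hM m hφ A ≤ ENNReal.ofReal (meanContent M m φ A) := by
  rw [meanMeasure, toMeasure_apply _ _ hA]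
  unfold meanOuterMeasure inducedOuterMeasure
  exact (OuterMeasure.ofFunction_le A).trans_eq (extend_eq _ hA)

lemma le_meanMeasure {ρ : Measure S}
    (h : ∀ A, MeasurableSet A → ρ A ≤ ENNReal.ofReal (meanContent M m φ A)) :
    ρ ≤ meanMeasure hM m hφ :=
  Measure.le_iff.2 fun A hA => by
    rw [meanMeasure, toMeasure_apply _ _ hA]
    exact (le_inducedOuterMeasure.2 h : ρ.toOuterMeasure ≤ _) A

instance : IsFiniteMeasure (meanMeasure hM m hφ) :=
  ⟨(meanMeasure_apply_le (m := m) hM hφ .univ).trans_lt ENNReal.ofReal_lt_top⟩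

/-- `meanContent` is invariant, so the largest measure below it is invariant too. -/
lemma map_meanMeasure (hid : ∀ s, φ 0 s = s) (hcomp : ∀ u v s, φ (u + v) s = φ u (φ v s))
    (u : G) : (meanMeasure hM m hφ).map (φ u) = meanMeasure hM m hφ := by
  have hle : ∀ u, (meanMeasure hM m hφ).map (φ u) ≤ meanMeasure hM m hφ := fun u =>
    le_meanMeasure hM hφ fun A hA => by
      rw [Measure.map_apply (hφ u) hA, ← meanContent_preimage hM hcomp u A]
      exact meanMeasure_apply_le hM hφ (hφ u hA)
  have hinv : φ u ∘ φ (-u) = id := funext fun s => by simp [← hcomp, hid]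
  refine le_antisymm (hle u) ?_
  calc meanMeasure hM m hφ = ((meanMeasure hM m hφ).map (φ (-u))).map (φ u) := by
        rw [Measure.map_map (hφ u) (hφ (-u)), hinv, Measure.map_id]
    _ ≤ (meanMeasure hM m hφ).map (φ u) := Measure.map_mono (hle (-u)) (hφ u)

lemma meanMeasure_absolutelyContinuous {μ : Measure S} (hmμ : m ≪ μ)
    (hμ : ∀ t, μ.map (φ t) ≪ μ) : meanMeasure hM m hφ ≪ μ :=
  Measure.AbsolutelyContinuous.mk fun A hA hμA => by
    have h : meanContent M m φ A = 0 :=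
      meanContent_eq_zero fun t => hmμ (by rw [← Measure.map_apply (hφ t) hA]; exact hμ t hμA)
    simpa [h] using meanMeasure_apply_le (m := m) hM hφ hA

end MeanContent

section Extraction

open Set Function

lemma exists_seq_of_forall_exists_forall_lt {α : Type*} [Nonempty α]
    (r : ℕ → ℕ → α → α → Prop) (h : ∀ k (x : ℕ → α), ∃ y, ∀ i < k, r i k (x i) y) :
    ∃ x : ℕ → α, ∀ i k, i < k → r i k (x i) (x k) := by
  choose next hnext using h
  let x : ℕ → α := Nat.strongRec fun k ih =>
    next k fun i => if hi : i < k then ih i hi else Classical.arbitrary α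
  refine ⟨x, fun i k hik => ?_⟩
  have hx : x k = next k fun i => if hi : i < k then x i else Classical.arbitrary α :=
    Nat.strongRec_eq _ k
  have := hnext k (fun i => if hi : i < k then x i else Classical.arbitrary α) i hik
  rwa [dif_pos hik, ← hx] at this

/-- For `i < k`, a common point `x` of the two preimages would put `φ (t i) x` into the
removed set `φ (t k - t i) ⁻¹' B k`. -/
lemma pairwise_disjoint_preimage_iInter_sdiff {G S : Type*} [AddGroup G] {φ : G → S → S}
    (hcomp : ∀ u v s, φ (u + v) s = φ u (φ v s))
    (B : ℕ → Set S) (t : ℕ → G) :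
    Pairwise (Disjoint on fun n => φ (t n) ⁻¹'
      ((⋂ k, B k) \ ⋃ k, ⋃ i ∈ Finset.range k, φ (t k - t i) ⁻¹' B k)) := by
  refine (Std.Symm.pairwise_on _).2 fun i k hik => disjoint_left.2 fun x hxi hxk => hxi.2 ?_
  refine mem_iUnion.2 ⟨k, mem_iUnion₂.2 ⟨i, Finset.mem_range.2 hik, ?_⟩⟩
  rw [mem_preimage, ← hcomp, sub_add_cancel]
  exact mem_iInter.1 hxk.1 k

variable {G : Type*} [AddCommGroup G] {M : (G → ℝ) →ₗ[ℝ] ℝ}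

/-- Markov's inequality for the mean, combined with a union bound over the translates. -/
theorem IsInvariantMean.exists_forall_sub_lt (hM : IsInvariantMean M) {h : G → ℝ}
    (hh : Memℓp h ∞) (h0 : 0 ≤ h) {η : ℝ} {F : Finset G} (hF : F.card * M h < η) :
    ∃ s, ∀ g ∈ F, h (s - g) < η := by
  by_contra! hcover
  have hη : 0 < η := (mul_nonneg (Nat.cast_nonneg _) (hM.map_nonneg hh h0)).trans_lt hF
  set I : G → ℝ := {u | η ≤ h u}.indicator 1
  have hI01 : ∀ u, 0 ≤ I u ∧ I u ≤ 1 := fun u => by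
    by_cases hu : η ≤ h u <;> simp [I, hu]
  have hI : Memℓp I ∞ := memℓp_infty ⟨1, forall_mem_range.2 fun u => by
    simpa [abs_of_nonneg (hI01 u).1] using (hI01 u).2⟩
  have hcount : M 1 ≤ F.card * M I := calc
    M 1 ≤ M fun s => ∑ g ∈ F, I (s - g) := by
      refine hM.mono (one_memℓp_infty (B := fun _ : G => ℝ))
        (Memℓp.finsetSum F fun g _ => hI.infty_comp (· - g)) fun s => ?_
      obtain ⟨g, hg, hgs⟩ := hcover s
      calc (1 : G → ℝ) s = I (s - g) := by simp [I, hgs]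
        _ ≤ ∑ g' ∈ F, I (s - g') := Finset.single_le_sum (fun g' _ => (hI01 _).1) hg
    _ = ∑ g ∈ F, M fun s => I (s - g) := by rw [← Finset.sum_fn, map_sum]
    _ = F.card * M I := by
      rw [Finset.sum_congr rfl fun g _ => ?_, Finset.sum_const, nsmul_eq_mul]
      simpa [sub_eq_add_neg] using hM.map_comp_add hI (-g)
  have hmarkov : η * M I ≤ M h := by
    rw [← smul_eq_mul, ← map_smul]
    refine hM.mono (hI.const_smul η) hh fun u => ?_
    by_cases hu : η ≤ h u
    · simp [I, hu]
    · simpa [I, hu] using h0 u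
  rw [hM.map_one] at hcount
  have : η ≤ F.card * M h := calc
    η ≤ η * (F.card * M I) := le_mul_of_one_le_right hη.le hcount
    _ = F.card * (η * M I) := by ring
    _ ≤ F.card * M h := mul_le_mul_of_nonneg_left hmarkov (Nat.cast_nonneg _)
  linarith

end Extraction

section Wandering

open Set Filter Topology Function
open scoped NNReal

variable {G S : Type*} [AddCommGroup G] [MeasurableSpace S] {M : (G → ℝ) →ₗ[ℝ] ℝ}
  {m : Measure S} [IsFiniteMeasure m] {φ : G → S → S}

lemma exists_subset_meanContent_lt (hM : IsInvariantMean M) (hφ : ∀ t, Measurable (φ t))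
    {R : Set S} (hR : MeasurableSet R) (hνR : meanMeasure hM m hφ R = 0) {ε : ℝ} (hε : 0 < ε)
    {δ : ℝ≥0∞} (hδ : δ ≠ 0) :
    ∃ B ⊆ R, MeasurableSet B ∧ meanContent M m φ B < ε ∧ m (R \ B) < δ := by
  have hlt : meanOuterMeasure M m φ R < ENNReal.ofReal ε := by
    rw [← toMeasure_apply _ (le_meanOuterMeasure_caratheodory hM hφ) hR]
    exact hνR.trans_lt (ENNReal.ofReal_pos.2 hε)
  unfold meanOuterMeasure inducedOuterMeasure at hlt
  simp only [OuterMeasure.ofFunction_apply, iInf_lt_iff] at hlt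
  obtain ⟨C, hRC, hC⟩ := hlt
  have hCm : ∀ i, MeasurableSet (C i) := fun i => by
    by_contra hi
    refine not_top_lt (hC.trans_eq' (ENNReal.tsum_eq_top_of_eq_top ⟨i, ?_⟩))
    exact extend_eq_top _ hi
  simp only [extend_eq _ (hCm _)] at hC
  set D : ℕ → Set S := fun N => ⋃ i ∈ Finset.range N, C i
  have hDm : ∀ N, MeasurableSet (D N) := fun N =>
    Finset.measurableSet_biUnion _ fun i _ => hCm i
  have hlim : Tendsto (fun N => m (R \ D N)) atTop (𝓝 0) := by
    have hanti : Antitone fun N => R \ D N := fun a b hab =>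
      sdiff_subset_sdiff_right (biUnion_subset_biUnion_left (Finset.range_subset_range.2 hab))
    have hinter : ⋂ N, R \ D N = ∅ := by
      refine eq_empty_of_forall_notMem fun x hx => ?_
      obtain ⟨i, hi⟩ := mem_iUnion.1 (hRC (mem_iInter.1 hx 0).1)
      exact (mem_iInter.1 hx (i + 1)).2 (mem_biUnion (Finset.self_mem_range_succ i) hi)
    simpa [hinter, Function.comp_def] using tendsto_measure_iInter_atTop
      (fun N => (hR.diff (hDm N)).nullMeasurableSet) hanti ⟨0, measure_ne_top _ _⟩
  obtain ⟨N, hN⟩ := (hlim.eventually (gt_mem_nhds (pos_iff_ne_zero.2 hδ))).exists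
  refine ⟨R ∩ D N, inter_subset_left, hR.inter (hDm N), ?_, by rwa [sdiff_self_inter]⟩
  have hsum : ENNReal.ofReal (∑ i ∈ Finset.range N, meanContent M m φ (C i))
      < ENNReal.ofReal ε := by
    rw [ENNReal.ofReal_sum_of_nonneg fun i _ => meanContent_nonneg hM]
    exact (ENNReal.sum_le_tsum _).trans_lt hC
  calc meanContent M m φ (R ∩ D N) ≤ meanContent M m φ (D N) :=
        meanContent_mono hM inter_subset_right
    _ ≤ ∑ i ∈ Finset.range N, meanContent M m φ (C i) := meanContent_biUnion_le hM _ _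
    _ < ε := (ENNReal.ofReal_lt_ofReal_iff hε).1 hsum

lemma IsInvariantMean.exists_seq_measure_preimage_sub_lt (hM : IsInvariantMean M)
    {B : ℕ → Set S} {η : ℕ → ℝ≥0} (hB : ∀ k, meanContent M m φ (B k) < η k / (k + 1)) :
    ∃ t : ℕ → G, ∀ i k, i < k → m (φ (t k - t i) ⁻¹' B k) < η k := by
  classical
  refine exists_seq_of_forall_exists_forall_lt (fun i k a b => m (φ (b - a) ⁻¹' B k) < η k)
    fun k x => ?_
  have hcard : ((Finset.range k).image x).card * meanContent M m φ (B k) < η k := by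
    have hk : (((Finset.range k).image x).card : ℝ) ≤ k + 1 := by
      exact_mod_cast (Finset.card_image_le.trans_eq (Finset.card_range k)).trans k.le_succ
    calc _ ≤ (k + 1 : ℝ) * meanContent M m φ (B k) :=
          mul_le_mul_of_nonneg_right hk (meanContent_nonneg hM)
      _ < η k := (lt_div_iff₀' (by positivity)).1 (hB k)
  obtain ⟨s, hs⟩ := hM.exists_forall_sub_lt (memℓp_measureReal_preimage m φ (B k))
    (fun _ => measureReal_nonneg) hcard
  refine ⟨s, fun i hi => ?_⟩
  have := hs (x i) (Finset.mem_image_of_mem x (Finset.mem_range.2 hi))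
  rwa [← ENNReal.ofReal_coe_nnreal, ENNReal.lt_ofReal_iff_toReal_lt (measure_ne_top _ _)]

theorem exists_subset_pairwise_disjoint_preimage (hM : IsInvariantMean M)
    (hφ : ∀ t, Measurable (φ t)) (hcomp : ∀ u v s, φ (u + v) s = φ u (φ v s)) {R : Set S}
    (hR : MeasurableSet R) (hmR : m R ≠ 0) (hνR : meanMeasure hM m hφ R = 0) :
    ∃ W ⊆ R, MeasurableSet W ∧ m W ≠ 0 ∧
      ∃ t : ℕ → G, Pairwise (Disjoint on fun n => φ (t n) ⁻¹' W) := by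
  obtain ⟨ε, hε, hεR⟩ := ENNReal.exists_pos_sum_of_countable (ENNReal.half_pos hmR).ne' ℕ
  set η : ℕ → ℝ≥0 := fun k => ε k / (k + 1)
  have hB : ∀ k, ∃ B ⊆ R, MeasurableSet B ∧ meanContent M m φ B < η k / (k + 1) ∧
      m (R \ B) < ε k := fun k =>
    exists_subset_meanContent_lt hM hφ hR hνR (by have := hε k; positivity)
      (ENNReal.coe_ne_zero.2 (hε k).ne')
  choose B hBR hBm hBη hBε using hB
  obtain ⟨t, ht⟩ := hM.exists_seq_measure_preimage_sub_lt hBη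
  set Rem := ⋃ k, ⋃ i ∈ Finset.range k, φ (t k - t i) ⁻¹' B k
  refine ⟨(⋂ k, B k) \ Rem, sdiff_subset.trans ((iInter_subset _ 0).trans (hBR 0)),
    (MeasurableSet.iInter hBm).diff (.iUnion fun k =>
      Finset.measurableSet_biUnion _ fun i _ => hφ _ (hBm k)), fun hW => ?_, t,
    pairwise_disjoint_preimage_iInter_sdiff hcomp B t⟩
  have hcover : R ⊆ ((⋂ k, B k) \ Rem) ∪ (⋃ k, R \ B k) ∪ Rem := fun x hx => by
    by_cases hxB : ∀ k, x ∈ B k <;> by_cases hxR : x ∈ Rem <;> simp_all [not_forall]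
  have hRem : m Rem ≤ ∑' k, (ε k : ℝ≥0∞) := by
    refine (measure_iUnion_le _).trans (ENNReal.tsum_le_tsum fun k => ?_)
    have hkη : (k : ℝ≥0) * η k ≤ ε k := by
      rw [mul_div_assoc', div_le_iff₀ (by positivity), mul_comm]
      gcongr
      simp
    calc m (⋃ i ∈ Finset.range k, φ (t k - t i) ⁻¹' B k)
        ≤ ∑ i ∈ Finset.range k, m (φ (t k - t i) ⁻¹' B k) := measure_biUnion_finset_le _ _
      _ ≤ ∑ i ∈ Finset.range k, (η k : ℝ≥0∞) :=
        Finset.sum_le_sum fun i hi => (ht i k (Finset.mem_range.1 hi)).le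
      _ ≤ ε k := by
        rw [Finset.sum_const, Finset.card_range, nsmul_eq_mul]
        exact_mod_cast hkη
  have hdiff : m (⋃ k, R \ B k) ≤ ∑' k, (ε k : ℝ≥0∞) :=
    (measure_iUnion_le _).trans (ENNReal.tsum_le_tsum fun k => (hBε k).le)
  refine (measure_mono (μ := m) hcover).not_gt ?_
  calc m (((⋂ k, B k) \ Rem) ∪ (⋃ k, R \ B k) ∪ Rem)
      ≤ m ((⋂ k, B k) \ Rem) + m (⋃ k, R \ B k) + m Rem :=
        (measure_union_le _ _).trans (by gcongr; exact measure_union_le _ _)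
    _ < m R / 2 + m R / 2 := by
        rw [hW, zero_add]
        exact ENNReal.add_lt_add (hdiff.trans_lt hεR) (hRem.trans_lt hεR)
    _ = m R := ENNReal.add_halves _

end Wandering

section Exhaustion

open Set

variable {S : Type*} [MeasurableSpace S]

theorem exists_seq_mem_measure_sdiff_iUnion_eq_zero (m : Measure S) [IsFiniteMeasure m]
    {C : Set (Set S)} (hC : ∀ A ∈ C, MeasurableSet A) (hempty : ∅ ∈ C) :
    ∃ W : ℕ → Set S, (∀ k, W k ∈ C) ∧ ∀ A ∈ C, m (A \ ⋃ k, W k) = 0 := by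
  set V : Set ℝ≥0∞ := {x | ∃ W : ℕ → Set S, (∀ k, W k ∈ C) ∧ m (⋃ k, W k) = x}
  obtain ⟨u, -, hu, huV⟩ :=
    exists_seq_tendsto_sSup (S := V) ⟨_, fun _ => ∅, fun _ => hempty, rfl⟩ (OrderTop.bddAbove V)
  choose W hWC hWu using huV
  set U := ⋃ j : ℕ, W j.unpair.1 j.unpair.2
  have hUC : ∀ j : ℕ, W j.unpair.1 j.unpair.2 ∈ C := fun j => hWC _ _
  have hUmax : ∀ W' : ℕ → Set S, (∀ k, W' k ∈ C) → m (⋃ k, W' k) ≤ m U := fun W' hW' =>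
    (le_sSup (s := V) ⟨W', hW', rfl⟩).trans <| le_of_tendsto' hu fun n => (hWu n).ge.trans <|
      measure_mono <| iUnion_subset fun k =>
        subset_iUnion_of_subset (Nat.pair n k) (by simp only [Nat.unpair_pair, subset_rfl])
  refine ⟨_, hUC, fun A hA => ?_⟩
  by_contra hpos
  let W' : ℕ → Set S := fun | 0 => A | j + 1 => W (j : ℕ).unpair.1 (j : ℕ).unpair.2
  have hle := hUmax W' fun | 0 => hA | j + 1 => hUC j
  rw [← union_iUnion_nat_succ] at hle
  change m (A ∪ U) ≤ m U at hle
  rw [union_comm, ← union_sdiff_self,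
    measure_union disjoint_sdiff_right ((hC A hA).diff (.iUnion fun j => hC _ (hUC j)))] at hle
  exact (ENNReal.lt_add_right (measure_ne_top m U) hpos).not_ge hle

end Exhaustion

section

variable {S G : Type*} [MeasurableSpace S]

def IsWeaklyWandering (μ : Measure S) (φ : G → S → S) (W : Set S) : Prop :=
  ∃ t : ℕ → G, Pairwise fun n k => μ (φ (t n) ⁻¹' W ∩ φ (t k) ⁻¹' W) = 0

lemma measure_compl_eq_zero_of_measure_rnDeriv_pos_sdiff {μ ν : Measure S}
    [ν.HaveLebesgueDecomposition μ] (hνμ : ν ≪ μ) {P : Set S}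
    (h : μ ({s | 0 < ν.rnDeriv μ s} \ P) = 0) : ν Pᶜ = 0 := by
  refine measure_eq_zero_iff_ae_notMem.2 ?_
  filter_upwards [Measure.rnDeriv_pos hνμ, measure_eq_zero_iff_ae_notMem.1 (hνμ h)]
    with s hs hsP
  simpa [hs] using hsP

end

theorem stmt5_general
    {S : Type*} [MeasurableSpace S]
    (μ : Measure S) [SigmaFinite μ]
    {G : Type*} [AddCommGroup G]
    [MeasurableSpace G]
    (φ : G → S → S)
    (hjoint : Measurable fun p : G × S => φ p.1 p.2)
    (hid : ∀ s, φ 0 s = s)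
    (hcomp : ∀ u v s, φ (u + v) s = φ u (φ v s))
    (hns : ∀ t, μ.map (φ t) ≪ μ ∧ μ ≪ μ.map (φ t))
    (ν₀ : Measure S)
    (P : Set S) (hP : P = {s | 0 < ν₀.rnDeriv μ s})
    (hmax : ∀ ν : Measure S, IsFiniteMeasure ν → ν ≪ μ → (∀ t, ν.map (φ t) = ν) →
      μ ({s | 0 < ν.rnDeriv μ s} \ P) = 0) :
    ∃ W : ℕ → Set S, (∀ k, MeasurableSet (W k)) ∧
      (∀ k, ∃ t : ℕ → G, ∀ n m, n ≠ m → μ (φ (t n) ⁻¹' (W k) ∩ φ (t m) ⁻¹' (W k)) = 0) ∧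
      μ (symmDiff Pᶜ (⋃ k, W k)) = 0 := by
  have hφ : ∀ t, Measurable (φ t) := fun t => hjoint.comp (measurable_const.prodMk measurable_id)
  have hPm : MeasurableSet P := hP ▸ measurableSet_lt measurable_const (ν₀.measurable_rnDeriv μ)
  obtain ⟨m, _, hμm, hmμ⟩ := exists_isFiniteMeasure_absolutelyContinuous μ
  obtain ⟨M, hM⟩ := exists_isInvariantMean G
  have hνμ := meanMeasure_absolutelyContinuous hM hφ hmμ fun t => (hns t).1
  have hνP : meanMeasure hM m hφ Pᶜ = 0 := measure_compl_eq_zero_of_measure_rnDeriv_pos_sdiff hνμ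
    (hmax _ inferInstance hνμ (map_meanMeasure hM hφ hid hcomp))
  obtain ⟨W, hWC, hWmax⟩ := exists_seq_mem_measure_sdiff_iUnion_eq_zero m
    (C := {A | MeasurableSet A ∧ A ⊆ Pᶜ ∧ IsWeaklyWandering μ φ A}) (fun A hA => hA.1)
    ⟨.empty, Set.empty_subset _, fun _ => 0, fun _ _ _ => by simp⟩
  have hWP : ⋃ k, W k ⊆ Pᶜ := Set.iUnion_subset fun k => (hWC k).2.1
  have hR : m (Pᶜ \ ⋃ k, W k) = 0 := by
    by_contra hR
    obtain ⟨W', hW'R, hW'm, hW'0, t, ht⟩ := exists_subset_pairwise_disjoint_preimage hM hφ hcomp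
      (hPm.compl.diff (.iUnion fun k => (hWC k).1)) hR (measure_mono_null Set.sdiff_subset hνP)
    refine hW'0 ?_
    have := hWmax W'
      ⟨hW'm, hW'R.trans Set.sdiff_subset, t, fun n k hnk => by simp [(ht hnk).inter_eq]⟩
    rwa [sdiff_eq_left.2 (Set.disjoint_of_subset_left hW'R Set.disjoint_sdiff_left)] at this
  refine ⟨W, fun k => (hWC k).1, fun k => ?_, ?_⟩
  · obtain ⟨t, ht⟩ := (hWC k).2.2
    exact ⟨t, fun n j h => ht h⟩
  · rw [symmDiff_of_ge hWP]
    exact hμm hR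

/-- The null part `N_𝓖 = S \ P_𝓖` is, modulo `μ`-null sets, a countable union
of measurable sets each of which is weakly wandering with respect to the action. -/
theorem stmt5
    {S : Type*} [MeasurableSpace S] [StandardBorelSpace S]
    (μ : Measure S) [SigmaFinite μ]
    {G : Type*} [AddCommGroup G] [TopologicalSpace G] [IsTopologicalAddGroup G]
    [LocallyCompactSpace G] [SecondCountableTopology G]
    [MeasurableSpace G] [BorelSpace G]
    (φ : G → S → S)
    (hjoint : Measurable fun p : G × S => φ p.1 p.2)
    (hid : ∀ s, φ 0 s = s)
    (hcomp : ∀ u v s, φ (u + v) s = φ u (φ v s))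
    (hns : ∀ t, μ.map (φ t) ≪ μ ∧ μ ≪ μ.map (φ t))
    (ν₀ : Measure S) [IsFiniteMeasure ν₀] (hν₀ac : ν₀ ≪ μ)
    (hν₀inv : ∀ t, ν₀.map (φ t) = ν₀)
    (P : Set S) (hP : P = {s | 0 < ν₀.rnDeriv μ s})
    (hmax : ∀ ν : Measure S, IsFiniteMeasure ν → ν ≪ μ → (∀ t, ν.map (φ t) = ν) →
      μ ({s | 0 < ν.rnDeriv μ s} \ P) = 0) :
    ∃ W : ℕ → Set S, (∀ k, MeasurableSet (W k)) ∧
      (∀ k, ∃ t : ℕ → G, ∀ n m, n ≠ m → μ (φ (t n) ⁻¹' (W k) ∩ φ (t m) ⁻¹' (W k)) = 0) ∧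
      μ (symmDiff Pᶜ (⋃ k, W k)) = 0 :=
  stmt5_general μ φ hjoint hid hcomp hns ν₀ P hP hmax
end

section
/- (Koopman–von Neumann lemma, continuous multiparameter case.) Let f : ℝ^d → ℝ be measurable, nonnegative, and bounded: 0 ≤ f(t) ≤ M < ∞ for all t ∈ ℝ^d. Then lim_{T→∞} (2T)^{-d} ∫_{(−T,T]^d} f(t) dt = 0 if and only if there exists a measurable set D ⊆ ℝ^d of density one such that f(t_n) → 0 as n → ∞ for every sequence (t_n)_{n∈ℕ} in D with ‖t_n‖_∞ → ∞. -/
/-!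
If the averages of `f` tend to `0`, Markov's inequality makes every superlevel set
`{f ≥ 1 / (k + 1)}` of density zero. Removing the `k`-th superlevel set only outside a box of radius
`R k`, with radii growing fast enough, removes a set of density zero in total, and `f → 0` along its
complement `D`. Conversely, given `D`, for every `ε > 0` the function `f` is at most `ε` outside the
union of a bounded box and `Dᶜ`, a set of density zero on which `f ≤ M`; hence the averages are
eventually at most `ε + o(1)`.
-/

open MeasureTheory Filter Set Topology

namespace KoopmanVonNeumann

variable {d : ℕ}

def box (d : ℕ) (T : ℝ) : Set (Fin d → ℝ) := univ.pi fun _ => Ioc (-T) T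

noncomputable def boxDensity (A : Set (Fin d → ℝ)) (T : ℝ) : ℝ :=
  volume.real (A ∩ box d T) / (2 * T) ^ d

def HasDensityZero (A : Set (Fin d → ℝ)) : Prop := Tendsto (boxDensity A) atTop (𝓝 0)

noncomputable def boxAverage (f : (Fin d → ℝ) → ℝ) (T : ℝ) : ℝ :=
  ((2 * T) ^ d)⁻¹ * ∫ t in box d T, f t

lemma measurableSet_box (T : ℝ) : MeasurableSet (box d T) :=
  .univ_pi fun _ => measurableSet_Ioc

lemma volume_box (T : ℝ) : volume (box d T) = ENNReal.ofReal (2 * T) ^ d := by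
  simp [box, volume_pi_pi, Real.volume_Ioc, two_mul]

lemma volume_box_ne_top (T : ℝ) : volume (box d T) ≠ ⊤ := by
  rw [volume_box]; exact ENNReal.pow_ne_top ENNReal.ofReal_ne_top

lemma volume_real_box {T : ℝ} (hT : 0 ≤ T) : volume.real (box d T) = (2 * T) ^ d := by
  simp [measureReal_def, volume_box, hT]

lemma box_mono : Monotone (box d) :=
  fun _ _ h => pi_mono fun _ _ => Ioc_subset_Ioc (neg_le_neg h) h

lemma norm_le_of_mem_box {T : ℝ} (hT : 0 ≤ T) {t : Fin d → ℝ} (ht : t ∈ box d T) : ‖t‖ ≤ T :=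
  (pi_norm_le_iff_of_nonneg hT).2 fun i => abs_le.2 ⟨(ht i trivial).1.le, (ht i trivial).2⟩

lemma le_norm_of_notMem_box {T : ℝ} {t : Fin d → ℝ} (ht : t ∉ box d T) : T ≤ ‖t‖ := by
  contrapose! ht
  intro i _
  have hi := abs_lt.1 ((norm_le_pi_norm t i).trans_lt ht)
  exact ⟨hi.1, hi.2.le⟩

lemma boxDensity_nonneg (A : Set (Fin d → ℝ)) {T : ℝ} (hT : 0 ≤ T) : 0 ≤ boxDensity A T := by
  unfold boxDensity; positivity

lemma boxDensity_le_of_inter_subset {A B : Set (Fin d → ℝ)} {T : ℝ} (hT : 0 ≤ T)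
    (h : A ∩ box d T ⊆ B) : boxDensity A T ≤ boxDensity B T := by
  have hfin : volume (B ∩ box d T) ≠ ⊤ :=
    ((measure_mono inter_subset_right).trans_lt (volume_box_ne_top T).lt_top).ne
  exact div_le_div_of_nonneg_right (measureReal_mono (subset_inter h inter_subset_right) hfin)
    (by positivity)

lemma boxDensity_union_le (A B : Set (Fin d → ℝ)) {T : ℝ} (hT : 0 ≤ T) :
    boxDensity (A ∪ B) T ≤ boxDensity A T + boxDensity B T := by
  unfold boxDensity
  rw [union_inter_distrib_right, ← add_div]
  gcongr
  exact measureReal_union_le _ _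

lemma HasDensityZero.union {A B : Set (Fin d → ℝ)} (hA : HasDensityZero A)
    (hB : HasDensityZero B) : HasDensityZero (A ∪ B) := by
  refine squeeze_zero' (eventually_ge_atTop 0 |>.mono fun _ hT => boxDensity_nonneg _ hT)
    (eventually_ge_atTop 0 |>.mono fun _ hT => boxDensity_union_le A B hT) ?_
  simpa using hA.add hB

lemma hasDensityZero_box (hd : 0 < d) (R : ℝ) : HasDensityZero (box d R) := by
  have hpow : Tendsto (fun T : ℝ => (2 * T) ^ d) atTop atTop :=
    (tendsto_pow_atTop hd.ne').comp (tendsto_id.const_mul_atTop two_pos)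
  refine squeeze_zero' (eventually_ge_atTop 0 |>.mono fun _ hT => boxDensity_nonneg _ hT)
    (eventually_ge_atTop 0 |>.mono fun T hT => ?_) (hpow.const_div_atTop (volume.real (box d R)))
  unfold boxDensity
  gcongr
  · exact volume_box_ne_top R
  · exact inter_subset_left

lemma integrableOn_box {f : (Fin d → ℝ) → ℝ} {M : ℝ} (hf : Measurable f) (hf0 : ∀ t, 0 ≤ f t)
    (hfM : ∀ t, f t ≤ M) (T : ℝ) : IntegrableOn f (box d T) :=
  Measure.integrableOn_of_bounded (volume_box_ne_top T) hf.aestronglyMeasurable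
    (ae_of_all _ fun t => (abs_of_nonneg (hf0 t)).trans_le (hfM t))

lemma boxDensity_setOf_le_le {f : (Fin d → ℝ) → ℝ} (hf0 : ∀ t, 0 ≤ f t) {T : ℝ} (hT : 0 < T)
    (hint : IntegrableOn f (box d T)) {c : ℝ} (hc : 0 < c) :
    boxDensity {t | c ≤ f t} T ≤ c⁻¹ * boxAverage f T := by
  have markov := mul_meas_ge_le_integral_of_nonneg (ae_of_all _ hf0) hint c
  rw [measureReal_restrict_apply' (measurableSet_box T)] at markov
  rw [boxDensity, boxAverage, ← mul_assoc, mul_comm c⁻¹, mul_assoc, div_eq_inv_mul]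
  gcongr
  rwa [le_inv_mul_iff₀ hc]

lemma hasDensityZero_setOf_le_of_tendsto_boxAverage {f : (Fin d → ℝ) → ℝ} (hf0 : ∀ t, 0 ≤ f t)
    (hint : ∀ T, IntegrableOn f (box d T)) (h : Tendsto (boxAverage f) atTop (𝓝 0)) {c : ℝ}
    (hc : 0 < c) : HasDensityZero {t | c ≤ f t} := by
  refine squeeze_zero' (eventually_ge_atTop 0 |>.mono fun _ hT => boxDensity_nonneg _ hT)
    (eventually_gt_atTop 0 |>.mono fun T hT => boxDensity_setOf_le_le hf0 hT (hint T) hc) ?_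
  simpa using h.const_mul c⁻¹

lemma boxAverage_le {f : (Fin d → ℝ) → ℝ} {M ε : ℝ} {A : Set (Fin d → ℝ)} (hA : MeasurableSet A)
    (hfM : ∀ t, f t ≤ M) (hfε : ∀ t ∉ A, f t ≤ ε) (hε : 0 ≤ ε) {T : ℝ} (hT : 0 < T)
    (hint : IntegrableOn f (box d T)) : boxAverage f T ≤ ε + M * boxDensity A T := by
  have hfin : volume (box d T) ≠ ⊤ := volume_box_ne_top T
  have hin : ∫ t in box d T ∩ A, f t ≤ M * volume.real (A ∩ box d T) := by
    calc ∫ t in box d T ∩ A, f t ≤ ∫ _ in box d T ∩ A, M :=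
          setIntegral_mono_on (hint.mono_set inter_subset_left)
            (integrableOn_const (ne_top_of_le_ne_top hfin (measure_mono inter_subset_left)))
            ((measurableSet_box T).inter hA) fun t _ => hfM t
      _ = M * volume.real (A ∩ box d T) := by
          rw [setIntegral_const, smul_eq_mul, mul_comm, inter_comm]
  have hout : ∫ t in box d T \ A, f t ≤ ε * volume.real (box d T) := by
    calc ∫ t in box d T \ A, f t ≤ ∫ _ in box d T \ A, ε :=
          setIntegral_mono_on (hint.mono_set sdiff_subset)
            (integrableOn_const (ne_top_of_le_ne_top hfin (measure_mono sdiff_subset)))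
            ((measurableSet_box T).diff hA) fun t ht => hfε t ht.2
      _ ≤ ε * volume.real (box d T) := by
          rw [setIntegral_const, smul_eq_mul, mul_comm]
          exact mul_le_mul_of_nonneg_left (measureReal_mono sdiff_subset hfin) hε
  rw [boxAverage, boxDensity, ← integral_inter_add_sdiff hA hint, ← volume_real_box hT.le]
  have hpos : 0 < volume.real (box d T) := by rw [volume_real_box hT.le]; positivity
  have hcancel : volume.real (box d T) * (M * (volume.real (A ∩ box d T) / volume.real (box d T)))
      = M * volume.real (A ∩ box d T) := by field_simp
  rw [inv_mul_le_iff₀ hpos, mul_add, hcancel]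
  linarith

lemma tendsto_boxAverage_zero {f : (Fin d → ℝ) → ℝ} {M : ℝ} (hf0 : ∀ t, 0 ≤ f t)
    (hfM : ∀ t, f t ≤ M) (hint : ∀ T, IntegrableOn f (box d T))
    (h : ∀ ε > 0, ∃ A, MeasurableSet A ∧ HasDensityZero A ∧ ∀ t ∉ A, f t ≤ ε) :
    Tendsto (boxAverage f) atTop (𝓝 0) := by
  refine tendsto_order.2 ⟨fun a ha => eventually_gt_atTop 0 |>.mono fun T hT => ?_, fun a ha => ?_⟩
  · exact ha.trans_le (mul_nonneg (by positivity) (setIntegral_nonneg (measurableSet_box T)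
      fun t _ => hf0 t))
  obtain ⟨A, hAmeas, hA, hfA⟩ := h (a / 2) (half_pos ha)
  have hMA : Tendsto (fun T => M * boxDensity A T) atTop (𝓝 0) := by simpa using hA.const_mul M
  have hsmall := hMA.eventually (gt_mem_nhds (half_pos ha))
  filter_upwards [hsmall, eventually_gt_atTop 0] with T hMT hT
  linarith [boxAverage_le hAmeas hfM hfA (half_pos ha).le hT (hint T)]

lemma exists_le_lt_succ {α : Type*} [LinearOrder α] [NoMaxOrder α] {R : ℕ → α}
    (hR : Tendsto R atTop atTop) {k : ℕ} {T : α} (hk : R k ≤ T) :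
    ∃ m, k ≤ m ∧ R m ≤ T ∧ T < R (m + 1) := by
  by_contra! h
  have hle : ∀ m, k ≤ m → R m ≤ T := fun m hm =>
    Nat.le_induction hk (fun n hkn hn => h n hkn hn) m hm
  obtain ⟨m, hm⟩ := (hR.eventually_gt_atTop T).and (eventually_ge_atTop k) |>.exists
  exact (hle m hm.2).not_gt hm.1

/-- The radii are chosen so that beyond `R k` the set `E k` has density below `1 / (k + 1)`; since
the `E k` increase, in the box of radius `T ∈ [R m, R (m + 1))` the union is contained in `E m`. -/
lemma exists_hasDensityZero_iUnion_sdiff_box {E : ℕ → Set (Fin d → ℝ)} (hE : Monotone E)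
    (hdens : ∀ k, HasDensityZero (E k)) :
    ∃ R : ℕ → ℝ, (∀ k : ℕ, (k : ℝ) ≤ R k) ∧ HasDensityZero (⋃ k, E k \ box d (R k)) := by
  have hS : ∀ k : ℕ, ∃ S : ℝ, ∀ T ≥ S, boxDensity (E k) T < 1 / ((k : ℝ) + 1) := fun k =>
    eventually_atTop.1 ((hdens k).eventually (gt_mem_nhds Nat.one_div_pos_of_nat))
  choose S hS using hS
  let g (k : ℕ) : ℝ := max (S k) k
  set R := partialSups g
  have hRk : ∀ k : ℕ, (k : ℝ) ≤ R k := fun k => (le_max_right _ _).trans (le_partialSups g k)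
  have hRS : ∀ k : ℕ, S k ≤ R k := fun k => (le_max_left _ _).trans (le_partialSups g k)
  refine ⟨R, hRk, tendsto_order.2 ⟨fun a ha => ?_, fun ε hε => ?_⟩⟩
  · exact eventually_ge_atTop 0 |>.mono fun T hT => ha.trans_le (boxDensity_nonneg _ hT)
  obtain ⟨k, hk⟩ := exists_nat_one_div_lt hε
  filter_upwards [eventually_ge_atTop (R k)] with T hT
  have hT0 : 0 ≤ T := (Nat.cast_nonneg k).trans ((hRk k).trans hT)
  obtain ⟨m, hkm, hmT, hTm⟩ :=
    exists_le_lt_succ (tendsto_atTop_mono hRk tendsto_natCast_atTop_atTop) hT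
  have hsub : (⋃ j, E j \ box d (R j)) ∩ box d T ⊆ E m := by
    rintro t ⟨ht, htT⟩
    obtain ⟨j, htj, htRj⟩ := mem_iUnion.1 ht
    have hjm : j ≤ m := by
      by_contra! hmj
      exact htRj (box_mono (hTm.le.trans (R.monotone hmj)) htT)
    exact hE hjm htj
  calc boxDensity (⋃ j, E j \ box d (R j)) T ≤ boxDensity (E m) T :=
        boxDensity_le_of_inter_subset hT0 hsub
    _ < 1 / ((m : ℝ) + 1) := hS m T ((hRS m).trans hmT)
    _ ≤ 1 / ((k : ℝ) + 1) := Nat.one_div_le_one_div hkm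
    _ < ε := hk

lemma exists_forall_le_norm_mem_of_seq {E α : Type*} [Norm E] [TopologicalSpace α] {g : E → α}
    {D : Set E} {a : α}
    (h : ∀ x : ℕ → E, (∀ n, x n ∈ D) → Tendsto (fun n => ‖x n‖) atTop atTop →
      Tendsto (fun n => g (x n)) atTop (𝓝 a))
    {U : Set α} (hU : U ∈ 𝓝 a) : ∃ R : ℝ, ∀ t ∈ D, R ≤ ‖t‖ → g t ∈ U := by
  by_contra! hne
  choose x hxD hxn hxU using fun n : ℕ => hne n
  obtain ⟨n, hn⟩ :=
    (h x hxD (tendsto_atTop_mono hxn tendsto_natCast_atTop_atTop)).eventually hU |>.exists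
  exact hxU n hn

lemma exists_densityOne_tendsto_of_tendsto_boxAverage {f : (Fin d → ℝ) → ℝ} (hf : Measurable f)
    (hf0 : ∀ t, 0 ≤ f t) (hint : ∀ T, IntegrableOn f (box d T))
    (h : Tendsto (boxAverage f) atTop (𝓝 0)) :
    ∃ D : Set (Fin d → ℝ), MeasurableSet D ∧ HasDensityZero Dᶜ ∧
      ∀ x : ℕ → (Fin d → ℝ), (∀ n, x n ∈ D) → Tendsto (fun n => ‖x n‖) atTop atTop →
        Tendsto (fun n => f (x n)) atTop (𝓝 0) := by
  let E (k : ℕ) : Set (Fin d → ℝ) := {t | 1 / ((k : ℝ) + 1) ≤ f t}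
  have hE : Monotone E := fun k l hkl t ht =>
    show _ ≤ f t from (Nat.one_div_le_one_div hkl).trans ht
  obtain ⟨R, hRk, hdens⟩ := exists_hasDensityZero_iUnion_sdiff_box hE fun k =>
    hasDensityZero_setOf_le_of_tendsto_boxAverage hf0 hint h Nat.one_div_pos_of_nat
  refine ⟨(⋃ k, E k \ box d (R k))ᶜ, (MeasurableSet.iUnion fun k =>
    (measurableSet_le measurable_const hf).diff (measurableSet_box _)).compl,
    by rwa [compl_compl], fun x hxD hx => tendsto_order.2 ⟨fun a ha => ?_, fun ε hε => ?_⟩⟩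
  · exact Eventually.of_forall fun n => ha.trans_le (hf0 _)
  obtain ⟨k, hk⟩ := exists_nat_one_div_lt hε
  filter_upwards [hx.eventually_gt_atTop (R k)] with n hn
  have hxk : x n ∉ E k \ box d (R k) := fun hxk => hxD n (mem_iUnion.2 ⟨k, hxk⟩)
  have hxR : x n ∉ box d (R k) := fun hxR =>
    (norm_le_of_mem_box ((Nat.cast_nonneg k).trans (hRk k)) hxR).not_gt hn
  exact (not_le.1 fun hxE => hxk ⟨hxE, hxR⟩).trans hk

end KoopmanVonNeumann

open KoopmanVonNeumann

/-- Koopman–von Neumann lemma, continuous multiparameter case: for a bounded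
nonnegative measurable `f : ℝ^d → ℝ`, the averages `(2T)^{-d} ∫_{(−T,T]^d} f(t) dt` tend to `0`
iff there is a measurable density-one set `D ⊆ ℝ^d` such that `f(t_n) → 0` along every
sequence in `D` with `‖t_n‖_∞ → ∞`.  (Here `‖·‖` on `Fin d → ℝ` is the sup-norm.) -/
theorem stmt15 (d : ℕ) (hd : 0 < d) (f : (Fin d → ℝ) → ℝ) (M : ℝ)
    (hfmeas : Measurable f) (hf0 : ∀ t, 0 ≤ f t) (hfM : ∀ t, f t ≤ M) :
    Tendsto (fun T : ℝ => ((2 * T) ^ d)⁻¹ *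
        ∫ t in Set.univ.pi fun _ : Fin d => Set.Ioc (-T) T, f t)
      atTop (nhds 0)
    ↔
    ∃ D : Set (Fin d → ℝ), MeasurableSet D ∧
      Tendsto (fun T : ℝ =>
          (volume (Dᶜ ∩ Set.univ.pi fun _ : Fin d => Set.Ioc (-T) T)).toReal / (2 * T) ^ d)
        atTop (nhds 0) ∧
      ∀ tseq : ℕ → (Fin d → ℝ), (∀ n, tseq n ∈ D) →
        Tendsto (fun n => ‖tseq n‖) atTop atTop →
        Tendsto (fun n => f (tseq n)) atTop (nhds 0) := by
  have hint := integrableOn_box hfmeas hf0 hfM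
  refine ⟨exists_densityOne_tendsto_of_tendsto_boxAverage hfmeas hf0 hint, ?_⟩
  rintro ⟨D, hD, hdens, hseq⟩
  refine tendsto_boxAverage_zero hf0 hfM hint fun ε hε => ?_
  obtain ⟨R, hR⟩ := exists_forall_le_norm_mem_of_seq hseq (Iic_mem_nhds hε)
  refine ⟨box d R ∪ Dᶜ, (measurableSet_box R).union hD.compl,
    (hasDensityZero_box hd R).union hdens, fun t ht => ?_⟩
  simp only [mem_union, mem_compl_iff, not_or, not_not] at ht
  exact hR t ht.2 (le_norm_of_notMem_box ht.1)
end

section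
/- Let P be a probability measure on the product space ℝ^{ℤ^d} (with the product σ-algebra) that is invariant under all shifts θ_τ, where (θ_τ x)(t) := x(t+τ) for τ, t ∈ ℤ^d. Suppose P is positively dependent (associated): for every n ∈ ℕ, all indices t_1,…,t_n ∈ ℤ^d, and all bounded measurable functions g₁, g₂ : ℝ^n → ℝ that are nondecreasing in each coordinate, the covariance under P of g₁(x_{t_1},…,x_{t_n}) and g₂(x_{t_1},…,x_{t_n}) is nonnegative. Then P is ergodic if and only if P is weakly mixing, where P is ergodic if lim_{T→∞} (2T)^{-d} Σ_{τ ∈ (−T,T]^d ∩ ℤ^d} P(A ∩ θ_τ(B)) = P(A)P(B) for all measurable A, B, and P is weakly mixing if lim_{T→∞} (2T)^{-d} Σ_{τ ∈ (−T,T]^d ∩ ℤ^d} |P(A ∩ θ_τ(B)) − P(A)P(B)| = 0 for all measurable A, B. -/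
/-!
Call a set an upper cylinder if it has the form `{x | (x t₁, …, x tₙ) ∈ U}` with `U` a measurable
upper set. For upper cylinders `A` and `B`, the set `θ_τ B` is again an upper cylinder, so
association makes `P(A ∩ θ_τ B) - P(A) P(B)` nonnegative; for such pairs the Cesàro averages of
this quantity and of its absolute value coincide, and ergodicity yields weak mixing. With one set
fixed, the sets `X` for which the weak-mixing average vanishes form a Dynkin system: complements
flip the sign of the covariance, and a countable disjoint union is a uniform approximation of its
finite partial unions, the error being at most the measure of the tail. Since the upper cylinders
form a π-system generating the product σ-algebra, two applications of the π-λ theorem give weak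
mixing for all measurable sets. The converse is the triangle inequality for averages.
-/

open MeasureTheory Filter

open scoped BigOperators Topology

section Cesaro

variable {ι : Type*} {F : ℕ → Finset ι} {f g : ι → ℝ}

variable (F) in
def CesaroNull (f : ι → ℝ) : Prop :=
  Tendsto (fun T => 𝔼 τ ∈ F T, |f τ|) atTop (𝓝 0)

lemma cesaroNull_zero : CesaroNull F 0 := by
  simp [CesaroNull]

lemma CesaroNull.neg (hf : CesaroNull F f) : CesaroNull F (-f) := by
  simpa [CesaroNull] using hf

lemma CesaroNull.add (hf : CesaroNull F f) (hg : CesaroNull F g) : CesaroNull F (f + g) := by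
  unfold CesaroNull at *
  refine squeeze_zero (fun T => Finset.expect_nonneg fun τ _ => abs_nonneg _)
    (fun T => ?_) (by simpa using hf.add hg)
  rw [← Finset.expect_add_distrib]
  exact Finset.expect_le_expect fun τ _ => abs_add_le _ _

lemma Finset.expect_const_le {s : Finset ι} {c : ℝ} (hc : 0 ≤ c) : 𝔼 _τ ∈ s, c ≤ c := by
  rcases s.eq_empty_or_nonempty with rfl | hs
  · simpa using hc
  · rw [Finset.expect_const hs]

lemma CesaroNull.of_forall_abs_sub_le
    (h : ∀ ε > 0, ∃ g, CesaroNull F g ∧ ∀ τ, |f τ - g τ| ≤ ε) : CesaroNull F f := by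
  refine tendsto_order.2 ⟨fun a ha => .of_forall fun _ =>
    ha.trans_le (Finset.expect_nonneg fun τ _ => abs_nonneg _), fun ε hε => ?_⟩
  obtain ⟨g, hg, hfg⟩ := h (ε / 2) (half_pos hε)
  filter_upwards [(tendsto_order.1 hg).2 (ε / 2) (half_pos hε)] with T hT
  calc 𝔼 τ ∈ F T, |f τ| ≤ 𝔼 τ ∈ F T, (|g τ| + ε / 2) :=
        Finset.expect_le_expect fun τ _ => by
          linarith [abs_sub_abs_le_abs_sub (f τ) (g τ), hfg τ]
    _ = 𝔼 τ ∈ F T, |g τ| + 𝔼 _τ ∈ F T, ε / 2 := Finset.expect_add_distrib _ _ _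
    _ < ε / 2 + ε / 2 := add_lt_add_of_lt_of_le hT (Finset.expect_const_le (half_pos hε).le)
    _ = ε := add_halves ε

lemma CesaroNull.tendsto_expect (hf : CesaroNull F f) :
    Tendsto (fun T => 𝔼 τ ∈ F T, f τ) atTop (𝓝 0) :=
  squeeze_zero_norm (fun _ => Finset.abs_expect_le _ _) hf

lemma tendsto_expect_iff_tendsto_expect_sub (hF : ∀ᶠ T in atTop, (F T).Nonempty) (c : ℝ) :
    Tendsto (fun T => 𝔼 τ ∈ F T, f τ) atTop (𝓝 c) ↔
      Tendsto (fun T => 𝔼 τ ∈ F T, (f τ - c)) atTop (𝓝 0) := by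
  have h : (fun T => 𝔼 τ ∈ F T, (f τ - c)) =ᶠ[atTop] fun T => 𝔼 τ ∈ F T, f τ - c := by
    filter_upwards [hF] with T hT
    rw [Finset.expect_sub_distrib, Finset.expect_const hT]
  rw [tendsto_congr' h, ← sub_self c, tendsto_sub_const_iff]

end Cesaro

section Discrepancy

variable {Ω : Type*} [MeasurableSpace Ω] {μ ν : Measure Ω}

/-- Both sides of `mixingCov` below are of this form: `ν` is the restriction of `μ` to
`ψ τ ⁻¹' B`, or the image of `μ.restrict A` under `ψ τ`. -/
def discrepancy (μ ν : Measure Ω) (X : Set Ω) : ℝ :=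
  ν.real X - ν.real Set.univ * μ.real X

@[simp]
lemma discrepancy_empty : discrepancy μ ν ∅ = 0 := by
  simp [discrepancy]

lemma discrepancy_union [IsFiniteMeasure μ] [IsFiniteMeasure ν] {Y Z : Set Ω}
    (hYZ : Disjoint Y Z) (hZ : MeasurableSet Z) :
    discrepancy μ ν (Y ∪ Z) = discrepancy μ ν Y + discrepancy μ ν Z := by
  rw [discrepancy, discrepancy, discrepancy, measureReal_union hYZ hZ, measureReal_union hYZ hZ]
  ring

lemma discrepancy_compl [IsProbabilityMeasure μ] [IsFiniteMeasure ν] {X : Set Ω}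
    (hX : MeasurableSet X) : discrepancy μ ν Xᶜ = -discrepancy μ ν X := by
  rw [discrepancy, discrepancy, measureReal_compl hX, probReal_compl_eq_one_sub hX]
  ring

lemma abs_discrepancy_le [IsProbabilityMeasure μ] (hν : ν ≤ μ) (X : Set Ω) :
    |discrepancy μ ν X| ≤ μ.real X := by
  have hνX : ν.real X ≤ μ.real X := ENNReal.toReal_mono (measure_ne_top μ X) (hν X)
  have hνuniv : ν.real Set.univ ≤ μ.real Set.univ :=
    ENNReal.toReal_mono (measure_ne_top μ Set.univ) (hν Set.univ)
  rw [probReal_univ (μ := μ)] at hνuniv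
  have hνuniv₀ : 0 ≤ ν.real Set.univ := measureReal_nonneg
  have hνX₀ : 0 ≤ ν.real X := measureReal_nonneg
  rw [discrepancy, abs_sub_le_iff]
  constructor <;> nlinarith

end Discrepancy

section DynkinExtension

open Function

variable {Ω ι : Type*} [MeasurableSpace Ω] {μ : Measure Ω} [IsProbabilityMeasure μ]
  {F : ℕ → Finset ι} {ν : ι → Measure Ω} [∀ τ, IsFiniteMeasure (ν τ)]

lemma measurableSet_accumulate {f : ℕ → Set Ω} (hf : ∀ i, MeasurableSet (f i)) (n : ℕ) :
    MeasurableSet (Set.accumulate f n) :=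
  .biUnion (Set.to_countable _) fun i _ => hf i

lemma tendsto_measureReal_sdiff_accumulate {f : ℕ → Set Ω} (hf : ∀ i, MeasurableSet (f i)) :
    Tendsto (fun n => μ.real ((⋃ i, f i) \ Set.accumulate f n)) atTop (𝓝 0) := by
  have hacc : Tendsto (fun n => μ.real (Set.accumulate f n)) atTop (𝓝 (μ.real (⋃ i, f i))) :=
    (ENNReal.tendsto_toReal (measure_ne_top μ _)).comp tendsto_measure_iUnion_accumulate
  simp_rw [measureReal_sdiff (Set.accumulate_subset_iUnion _) (measurableSet_accumulate hf _)
    (measure_ne_top μ _)]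
  simpa using (tendsto_const_nhds (x := μ.real (⋃ i, f i))).sub hacc

lemma CesaroNull.discrepancy_iUnion (hν : ∀ τ, ν τ ≤ μ) {f : ℕ → Set Ω}
    (hdisj : Pairwise (Disjoint on f)) (hf : ∀ i, MeasurableSet (f i))
    (h : ∀ i, CesaroNull F fun τ => discrepancy μ (ν τ) (f i)) :
    CesaroNull F fun τ => discrepancy μ (ν τ) (⋃ i, f i) := by
  have hacc n : CesaroNull F fun τ => discrepancy μ (ν τ) (Set.accumulate f n) := by
    induction n with
    | zero => simpa using h 0
    | succ n ih =>
      simp_rw [Set.accumulate_succ,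
        discrepancy_union (Set.disjoint_accumulate hdisj n.lt_succ_self) (hf (n + 1))]
      exact ih.add (h (n + 1))
  refine .of_forall_abs_sub_le fun ε hε => ?_
  obtain ⟨n, hn⟩ :=
    ((tendsto_order.1 (tendsto_measureReal_sdiff_accumulate (μ := μ) hf)).2 ε hε).exists
  refine ⟨_, hacc n, fun τ => ?_⟩
  have hsplit := discrepancy_union (μ := μ) (ν := ν τ) Set.disjoint_sdiff_right
    ((MeasurableSet.iUnion hf).diff (measurableSet_accumulate hf n))
  rw [Set.union_sdiff_cancel (Set.accumulate_subset_iUnion n)] at hsplit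
  rw [hsplit, add_sub_cancel_left]
  exact (abs_discrepancy_le (hν τ) _).trans hn.le

lemma CesaroNull.discrepancy_of_isPiSystem (hν : ∀ τ, ν τ ≤ μ) {S : Set (Set Ω)}
    (hgen : ‹MeasurableSpace Ω› = .generateFrom S) (hS : IsPiSystem S)
    (hbase : ∀ X ∈ S, CesaroNull F fun τ => discrepancy μ (ν τ) X)
    {X : Set Ω} (hX : MeasurableSet X) :
    CesaroNull F fun τ => discrepancy μ (ν τ) X := by
  induction X, hX using MeasurableSpace.induction_on_inter hgen hS with
  | empty =>
    simp only [discrepancy_empty]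
    exact cesaroNull_zero
  | basic X hX => exact hbase X hX
  | compl X hX ih =>
    simp only [discrepancy_compl hX]
    exact ih.neg
  | iUnion f hdisj hf ih => exact CesaroNull.discrepancy_iUnion hν hdisj hf ih

end DynkinExtension

lemma IsUpperSet.monotone_indicator_one {α : Type*} [Preorder α] {U : Set α}
    (hU : IsUpperSet U) : Monotone (U.indicator (1 : α → ℝ)) := by
  intro u v huv
  by_cases hu : u ∈ U
  · simp [hu, hU huv hu]
  · simp [hu, Set.indicator_nonneg]

section UpperCylinders

variable {I : Type*}

variable (I) in
def upperCylinders : Set (Set (I → ℝ)) :=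
  {E | ∃ (n : ℕ) (t : Fin n → I) (U : Set (Fin n → ℝ)), IsUpperSet U ∧ MeasurableSet U ∧
    E = (fun x i => x (t i)) ⁻¹' U}

def IsAssociated (μ : Measure (I → ℝ)) : Prop :=
  ∀ (n : ℕ) (ts : Fin n → I) (g₁ g₂ : (Fin n → ℝ) → ℝ),
    Measurable g₁ → Measurable g₂ →
    (∃ C, ∀ u, |g₁ u| ≤ C) → (∃ C, ∀ u, |g₂ u| ≤ C) →
    Monotone g₁ → Monotone g₂ →
    0 ≤ (∫ x, g₁ (fun i => x (ts i)) * g₂ (fun i => x (ts i)) ∂μ) -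
      (∫ x, g₁ (fun i => x (ts i)) ∂μ) * (∫ x, g₂ (fun i => x (ts i)) ∂μ)

lemma measurableSet_of_mem_upperCylinders {E : Set (I → ℝ)} (hE : E ∈ upperCylinders I) :
    MeasurableSet E := by
  obtain ⟨n, t, U, -, hU, rfl⟩ := hE
  exact (measurable_pi_lambda _ fun i => measurable_pi_apply (t i)) hU

lemma exists_common_coordinates {E E' : Set (I → ℝ)} (hE : E ∈ upperCylinders I)
    (hE' : E' ∈ upperCylinders I) :
    ∃ (n : ℕ) (t : Fin n → I) (U V : Set (Fin n → ℝ)), IsUpperSet U ∧ MeasurableSet U ∧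
      IsUpperSet V ∧ MeasurableSet V ∧
      E = (fun x i => x (t i)) ⁻¹' U ∧ E' = (fun x i => x (t i)) ⁻¹' V := by
  obtain ⟨n, t, U, hU, hUm, rfl⟩ := hE
  obtain ⟨m, s, V, hV, hVm, rfl⟩ := hE'
  refine ⟨n + m, Fin.append t s, (· ∘ Fin.castAdd m) ⁻¹' U, (· ∘ Fin.natAdd n) ⁻¹' V,
    hU.preimage fun u v huv i => huv _, ?_, hV.preimage fun u v huv i => huv _, ?_, ?_, ?_⟩
  · exact (measurable_pi_lambda _ fun i => measurable_pi_apply _) hUm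
  · exact (measurable_pi_lambda _ fun i => measurable_pi_apply _) hVm
  · ext x; simp [Function.comp_def]
  · ext x; simp [Function.comp_def]

lemma isPiSystem_upperCylinders : IsPiSystem (upperCylinders I) := by
  intro E hE E' hE' _
  obtain ⟨n, t, U, V, hU, hUm, hV, hVm, rfl, rfl⟩ := exists_common_coordinates hE hE'
  exact ⟨n, t, U ∩ V, hU.inter hV, hUm.inter hVm, rfl⟩

lemma pi_eq_generateFrom_upperCylinders :
    (MeasurableSpace.pi : MeasurableSpace (I → ℝ)) =
      MeasurableSpace.generateFrom (upperCylinders I) := by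
  refine le_antisymm (iSup_le fun i => Measurable.comap_le ?_)
    (MeasurableSpace.generateFrom_le fun E hE => measurableSet_of_mem_upperCylinders hE)
  refine measurable_of_Ioi fun a => MeasurableSpace.measurableSet_generateFrom
    ⟨1, fun _ => i, {v | a < v 0}, fun u v huv hu => hu.trans_le (huv 0),
      measurableSet_lt measurable_const (measurable_pi_apply 0), rfl⟩

lemma IsAssociated.measureReal_mul_le_measureReal_inter {μ : Measure (I → ℝ)}
    [IsProbabilityMeasure μ] (hμ : IsAssociated μ) {E E' : Set (I → ℝ)}
    (hE : E ∈ upperCylinders I) (hE' : E' ∈ upperCylinders I) :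
    μ.real E * μ.real E' ≤ μ.real (E ∩ E') := by
  obtain ⟨n, t, U, V, hU, hUm, hV, hVm, rfl, rfl⟩ := exists_common_coordinates hE hE'
  have hproj : Measurable fun (x : I → ℝ) (i : Fin n) => x (t i) :=
    measurable_pi_lambda _ fun i => measurable_pi_apply (t i)
  have key := hμ n t (U.indicator 1) (V.indicator 1)
    (measurable_one.indicator hUm) (measurable_one.indicator hVm)
    ⟨1, fun u => by by_cases hu : u ∈ U <;> simp [hu]⟩
    ⟨1, fun u => by by_cases hu : u ∈ V <;> simp [hu]⟩
    hU.monotone_indicator_one hV.monotone_indicator_one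
  have hind (W : Set (Fin n → ℝ)) (x : I → ℝ) :
      W.indicator (1 : (Fin n → ℝ) → ℝ) (fun i => x (t i)) =
        ((fun (x : I → ℝ) i => x (t i)) ⁻¹' W).indicator 1 x := by
    by_cases hx : x ∈ (fun (x : I → ℝ) i => x (t i)) ⁻¹' W <;> simp_all
  have hmul (s s' : Set (I → ℝ)) (x : I → ℝ) :
      s.indicator (1 : (I → ℝ) → ℝ) x * s'.indicator 1 x = (s ∩ s').indicator 1 x :=
    (congrFun Set.inter_indicator_one x).symm
  simp only [hind, hmul] at key
  rwa [integral_indicator_one ((hproj hUm).inter (hproj hVm)), integral_indicator_one (hproj hUm),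
    integral_indicator_one (hproj hVm), sub_nonneg] at key

end UpperCylinders

section Mixing

variable {Ω ι : Type*} [MeasurableSpace Ω] {μ : Measure Ω} {ψ : ι → Ω → Ω} {F : ℕ → Finset ι}

def mixingCov (μ : Measure Ω) (ψ : ι → Ω → Ω) (A B : Set Ω) (τ : ι) : ℝ :=
  μ.real (A ∩ ψ τ ⁻¹' B) - μ.real A * μ.real B

lemma mixingCov_eq_discrepancy_restrict (hψ : ∀ τ, MeasurePreserving (ψ τ) μ μ)
    (A : Set Ω) {B : Set Ω} (hB : MeasurableSet B) :
    mixingCov μ ψ A B = fun τ => discrepancy μ (μ.restrict (ψ τ ⁻¹' B)) A := by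
  ext τ
  rw [mixingCov, discrepancy, measureReal_restrict_apply' ((hψ τ).measurable hB),
    measureReal_restrict_apply_univ, (hψ τ).measureReal_preimage hB.nullMeasurableSet, mul_comm]

lemma mixingCov_eq_discrepancy_map (hψ : ∀ τ, MeasurePreserving (ψ τ) μ μ)
    (A : Set Ω) {B : Set Ω} (hB : MeasurableSet B) :
    mixingCov μ ψ A B = fun τ => discrepancy μ ((μ.restrict A).map (ψ τ)) B := by
  ext τ
  rw [mixingCov, discrepancy, map_measureReal_apply (hψ τ).measurable hB,
    map_measureReal_apply (hψ τ).measurable .univ, Set.preimage_univ,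
    measureReal_restrict_apply ((hψ τ).measurable hB), measureReal_restrict_apply_univ,
    Set.inter_comm]

lemma MeasureTheory.MeasurePreserving.map_restrict_le {f : Ω → Ω}
    (hf : MeasurePreserving f μ μ) (A : Set Ω) : (μ.restrict A).map f ≤ μ :=
  calc (μ.restrict A).map f ≤ μ.map f := Measure.map_mono Measure.restrict_le_self hf.measurable
    _ = μ := hf.map_eq

lemma MeasureTheory.MeasurePreserving.of_leftInverse {f g : Ω → Ω}
    (hf : MeasurePreserving f μ μ) (hg : Measurable g) (hgf : Function.LeftInverse g f) :
    MeasurePreserving g μ μ := by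
  refine ⟨hg, ?_⟩
  conv_lhs => rw [← hf.map_eq]
  rw [Measure.map_map hg hf.measurable, hgf.comp_eq_id, Measure.map_id]

variable [IsProbabilityMeasure μ]

theorem cesaroNull_mixingCov_of_isPiSystem (hψ : ∀ τ, MeasurePreserving (ψ τ) μ μ)
    {S : Set (Set Ω)} (hgen : ‹MeasurableSpace Ω› = .generateFrom S) (hS : IsPiSystem S)
    (hpos : ∀ A ∈ S, ∀ B ∈ S, ∀ τ, 0 ≤ mixingCov μ ψ A B τ)
    (herg : ∀ A B, MeasurableSet A → MeasurableSet B →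
      Tendsto (fun T => 𝔼 τ ∈ F T, mixingCov μ ψ A B τ) atTop (𝓝 0))
    {A B : Set Ω} (hA : MeasurableSet A) (hB : MeasurableSet B) :
    CesaroNull F (mixingCov μ ψ A B) := by
  have hmeas {X} (hX : X ∈ S) : MeasurableSet X := hgen ▸ .basic X hX
  have hSS {A B} (hA : A ∈ S) (hB : B ∈ S) : CesaroNull F (mixingCov μ ψ A B) := by
    simpa only [CesaroNull, abs_of_nonneg (hpos A hA B hB _)] using
      herg A B (hmeas hA) (hmeas hB)
  have hSB {B} (hB : B ∈ S) : CesaroNull F (mixingCov μ ψ A B) := by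
    rw [mixingCov_eq_discrepancy_restrict hψ A (hmeas hB)]
    refine .discrepancy_of_isPiSystem (fun _ => Measure.restrict_le_self) hgen hS
      (fun X hX => ?_) hA
    rw [← mixingCov_eq_discrepancy_restrict hψ X (hmeas hB)]
    exact hSS hX hB
  rw [mixingCov_eq_discrepancy_map hψ A hB]
  refine .discrepancy_of_isPiSystem (fun τ => (hψ τ).map_restrict_le A) hgen hS
    (fun X hX => ?_) hB
  rw [← mixingCov_eq_discrepancy_map hψ A (hmeas hX)]
  exact hSB hX

theorem ergodic_iff_cesaroNull_mixingCov (hψ : ∀ τ, MeasurePreserving (ψ τ) μ μ)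
    (hF : ∀ᶠ T in atTop, (F T).Nonempty)
    {S : Set (Set Ω)} (hgen : ‹MeasurableSpace Ω› = .generateFrom S) (hS : IsPiSystem S)
    (hpos : ∀ A ∈ S, ∀ B ∈ S, ∀ τ, 0 ≤ mixingCov μ ψ A B τ) :
    (∀ A B, MeasurableSet A → MeasurableSet B →
      Tendsto (fun T => 𝔼 τ ∈ F T, μ.real (A ∩ ψ τ ⁻¹' B)) atTop (𝓝 (μ.real A * μ.real B))) ↔
    (∀ A B, MeasurableSet A → MeasurableSet B → CesaroNull F (mixingCov μ ψ A B)) := by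
  refine ⟨fun herg A B hA hB => ?_, fun h A B hA hB => ?_⟩
  · refine cesaroNull_mixingCov_of_isPiSystem hψ hgen hS hpos (fun A B hA hB => ?_) hA hB
    exact (tendsto_expect_iff_tendsto_expect_sub hF _).1 (herg A B hA hB)
  · exact (tendsto_expect_iff_tendsto_expect_sub hF _).2 (h A B hA hB).tendsto_expect

end Mixing

lemma comp_preimage_mem_upperCylinders {I : Type*} (σ : I → I) {E : Set (I → ℝ)}
    (hE : E ∈ upperCylinders I) : (fun x => x ∘ σ) ⁻¹' E ∈ upperCylinders I := by
  obtain ⟨n, t, U, hU, hUm, rfl⟩ := hE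
  exact ⟨n, σ ∘ t, U, hU, hUm, rfl⟩

lemma IsAssociated.mixingCov_nonneg {I ι : Type*} {μ : Measure (I → ℝ)}
    [IsProbabilityMeasure μ] (hμ : IsAssociated μ) {σ : ι → I → I}
    (hσ : ∀ τ, MeasurePreserving (fun x => x ∘ σ τ) μ μ) {A B : Set (I → ℝ)}
    (hA : A ∈ upperCylinders I) (hB : B ∈ upperCylinders I) (τ : ι) :
    0 ≤ mixingCov μ (fun τ x => x ∘ σ τ) A B τ := by
  rw [mixingCov, sub_nonneg, ← (hσ τ).measureReal_preimage
    (measurableSet_of_mem_upperCylinders hB).nullMeasurableSet]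
  exact hμ.measureReal_mul_le_measureReal_inter hA (comp_preimage_mem_upperCylinders _ hB)

lemma inv_mul_sum_piFinset_Ioc_eq_expect (d T : ℕ) (f : (Fin d → ℤ) → ℝ) :
    ((2 * T : ℝ) ^ d)⁻¹ * ∑ τ ∈ Fintype.piFinset fun _ : Fin d => Finset.Ioc (-(T : ℤ)) T, f τ =
      𝔼 τ ∈ Fintype.piFinset fun _ : Fin d => Finset.Ioc (-(T : ℤ)) T, f τ := by
  rw [Finset.expect_eq_sum_div_card, div_eq_inv_mul, Fintype.card_piFinset, Finset.prod_const,
    Int.card_Ioc, Finset.card_univ, Fintype.card_fin, show ((T : ℤ) - -T).toNat = 2 * T by omega]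
  push_cast
  rfl

lemma eventually_nonempty_piFinset_Ioc (d : ℕ) :
    ∀ᶠ T : ℕ in atTop, (Fintype.piFinset fun _ : Fin d => Finset.Ioc (-(T : ℤ)) T).Nonempty :=
  eventually_atTop.2 ⟨1, fun _ hT => Fintype.piFinset_nonempty.2 fun _ =>
    Finset.nonempty_Ioc.2 (by omega)⟩

/-- A shift-invariant, positively dependent (associated) probability measure `P`
on `ℝ^{ℤ^d}` (with the product σ-algebra) is ergodic iff it is weakly mixing, where
ergodicity and weak mixing are expressed by Cesàro averages of `P(A ∩ θ_τ(B)) − P(A)P(B)`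
and of its absolute value, respectively. -/
theorem stmt17 (d : ℕ)
    (P : Measure ((Fin d → ℤ) → ℝ)) [IsProbabilityMeasure P]
    (θ : (Fin d → ℤ) → ((Fin d → ℤ) → ℝ) → ((Fin d → ℤ) → ℝ))
    (hθ : ∀ τ x t, θ τ x t = x (t + τ))
    (hinv : ∀ τ, P.map (θ τ) = P)
    (hassoc : ∀ (n : ℕ) (ts : Fin n → (Fin d → ℤ)) (g₁ g₂ : (Fin n → ℝ) → ℝ),
      Measurable g₁ → Measurable g₂ →
      (∃ C, ∀ u, |g₁ u| ≤ C) → (∃ C, ∀ u, |g₂ u| ≤ C) →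
      Monotone g₁ → Monotone g₂ →
      0 ≤ (∫ x, g₁ (fun i => x (ts i)) * g₂ (fun i => x (ts i)) ∂P) -
        (∫ x, g₁ (fun i => x (ts i)) ∂P) * (∫ x, g₂ (fun i => x (ts i)) ∂P)) :
    (∀ A B : Set ((Fin d → ℤ) → ℝ), MeasurableSet A → MeasurableSet B →
      Tendsto (fun T : ℕ => ((2 * T : ℝ) ^ d)⁻¹ *
          ∑ τ ∈ Fintype.piFinset fun _ : Fin d => Finset.Ioc (-(T : ℤ)) (T : ℤ),
            (P (A ∩ θ τ '' B)).toReal)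
        atTop (nhds ((P A).toReal * (P B).toReal)))
    ↔
    (∀ A B : Set ((Fin d → ℤ) → ℝ), MeasurableSet A → MeasurableSet B →
      Tendsto (fun T : ℕ => ((2 * T : ℝ) ^ d)⁻¹ *
          ∑ τ ∈ Fintype.piFinset fun _ : Fin d => Finset.Ioc (-(T : ℤ)) (T : ℤ),
            |(P (A ∩ θ τ '' B)).toReal - (P A).toReal * (P B).toReal|)
        atTop (nhds 0)) := by
  set ψ : (Fin d → ℤ) → ((Fin d → ℤ) → ℝ) → ((Fin d → ℤ) → ℝ) :=
    fun τ x => x ∘ fun t => t - τ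
  have hψθ τ : Function.LeftInverse (ψ τ) (θ τ) := fun x => by ext t; simp [ψ, hθ]
  have hθψ τ : Function.RightInverse (ψ τ) (θ τ) := fun x => by ext t; simp [ψ, hθ]
  have hψ τ : MeasurePreserving (ψ τ) P P := by
    refine .of_leftInverse ⟨?_, hinv τ⟩ (measurable_pi_lambda _ fun t => measurable_pi_apply _)
      (hψθ τ)
    simpa only [funext₂ (hθ τ)] using measurable_pi_lambda _ fun t => measurable_pi_apply _
  simp only [inv_mul_sum_piFinset_Ioc_eq_expect, Set.image_eq_preimage_of_inverse (hψθ _) (hθψ _)]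
  exact ergodic_iff_cesaroNull_mixingCov hψ (eventually_nonempty_piFinset_Ioc d)
    pi_eq_generateFrom_upperCylinders isPiSystem_upperCylinders
    fun A hA B hB τ => IsAssociated.mixingCov_nonneg hassoc hψ hA hB τ
end

section
/- Let (S, 𝓑, μ) be a standard Borel space with a σ-finite measure μ, let {φ_t}_{t∈ℝ^d} be a nonsingular ℝ^d-action on (S,μ) with (s,t) ↦ φ_t(s) jointly measurable, and let w : ℝ^d × S → (0,∞) be jointly measurable such that for each t ∈ ℝ^d, w(t,·) is a version of the Radon–Nikodym derivative of the measure A ↦ μ(φ_t(A)) with respect to μ, and w(t+h,s) = w(h,s)·w(t,φ_h(s)) for all t,h ∈ ℝ^d and all s ∈ S. For h ∈ L¹(S,μ) with h ≥ 0, define U_t h := w(t,·)·(h∘φ_t) and R(t) := ∫_S min((U_t h)(s), h(s)) μ(ds). Then (t,τ) ↦ R(t − τ) is nonnegative definite on ℝ^d × ℝ^d: for every n ∈ ℕ, all t_1,…,t_n ∈ ℝ^d and all real c_1,…,c_n, Σ_{i=1}^n Σ_{j=1}^n c_i c_j R(t_i − t_j) ≥ 0. -/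
/-!
Changing variables along `φ τ`, the cocycle identity gives
`R (t - τ) = ∫ min ((U_t h) s) ((U_τ h) s) dμ`. For `a, b ≥ 0`, `min a b` is the Lebesgue measure
of `(0, a] ∩ (0, b]`, so `(min (a i) (a j))` is a Gram matrix of indicators in `L²(ℝ)`, hence
positive semidefinite at every point `s`; integrating in `s` preserves this.
-/

open MeasureTheory

section MinKernel

variable {ι : Type*} [Fintype ι]

theorem sum_mul_min_nonneg (a : ι → ℝ) (ha : ∀ i, 0 ≤ a i) (c : ι → ℝ) :
    0 ≤ ∑ i, ∑ j, c i * c j * min (a i) (a j) := by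
  have hM : (Matrix.of fun i j => min (a i) (a j)).PosSemidef := by
    have hvol : (Matrix.of fun i j => min (a i) (a j))
        = Matrix.of fun i j => volume.real (Set.Ioc 0 (a i) ∩ Set.Ioc 0 (a j)) := by
      ext i j
      simp [Set.Ioc_inter_Ioc, ha]
    rw [hvol]
    exact posSemidef_matrix_measure_inter (fun _ => measurableSet_Ioc)
      fun _ => measure_Ioc_lt_top.ne
  simpa [dotProduct, Matrix.mulVec, Finset.mul_sum, mul_assoc, mul_comm, mul_left_comm]
    using hM.dotProduct_mulVec_nonneg c

theorem sum_mul_integral_min_nonneg {S : Type*} [MeasurableSpace S] {μ : Measure S}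
    (g : ι → S → ℝ) (hg : ∀ i, 0 ≤ᵐ[μ] g i) (hint : ∀ i, Integrable (g i) μ) (c : ι → ℝ) :
    0 ≤ ∑ i, ∑ j, c i * c j * ∫ s, min (g i s) (g j s) ∂μ := by
  have hmin : ∀ i j, Integrable (fun s => c i * c j * min (g i s) (g j s)) μ :=
    fun i j => ((hint i).inf (hint j)).const_mul _
  have hswap : ∑ i, ∑ j, c i * c j * ∫ s, min (g i s) (g j s) ∂μ
      = ∫ s, ∑ i, ∑ j, c i * c j * min (g i s) (g j s) ∂μ := by
    rw [integral_finsetSum _ fun i _ => integrable_finsetSum _ fun j _ => hmin i j]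
    refine Finset.sum_congr rfl fun i _ => ?_
    rw [integral_finsetSum _ fun j _ => hmin i j]
    simp only [integral_const_mul]
  rw [hswap]
  refine integral_nonneg_of_ae ?_
  filter_upwards [ae_all_iff.2 hg] with s hs
  exact sum_mul_min_nonneg (fun i => g i s) hs c

end MinKernel

section ChangeOfVariables

variable {S T : Type*} [MeasurableSpace S] [MeasurableSpace T] {μ : Measure S} {ν : Measure T}
  (e : S ≃ᵐ T) {ρ : S → ℝ}

theorem ae_eq_toReal_rnDeriv_of_ofReal
    (hρ : (fun s => ENNReal.ofReal (ρ s)) =ᵐ[μ] (ν.map e.symm).rnDeriv μ) (hρ0 : 0 ≤ᵐ[μ] ρ) :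
    ρ =ᵐ[μ] fun s => ((ν.map e.symm).rnDeriv μ s).toReal := by
  filter_upwards [hρ, hρ0] with s hs hs0
  rw [← hs, ENNReal.toReal_ofReal hs0]

variable [SigmaFinite μ] [SigmaFinite ν]

theorem integral_mul_comp_of_rnDeriv (hνμ : ν.map e.symm ≪ μ)
    (hρ : (fun s => ENNReal.ofReal (ρ s)) =ᵐ[μ] (ν.map e.symm).rnDeriv μ) (hρ0 : 0 ≤ᵐ[μ] ρ)
    (F : T → ℝ) : ∫ s, ρ s * F (e s) ∂μ = ∫ t, F t ∂ν := by
  have := e.symm.sigmaFinite_map (μ := ν)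
  calc ∫ s, ρ s * F (e s) ∂μ = ∫ s, ((ν.map e.symm).rnDeriv μ s).toReal * F (e s) ∂μ := by
        refine integral_congr_ae ?_
        filter_upwards [ae_eq_toReal_rnDeriv_of_ofReal e hρ hρ0] with s hs
        rw [hs]
    _ = ∫ s, F (e s) ∂(ν.map e.symm) := integral_toReal_rnDeriv_mul hνμ
    _ = ∫ t, F t ∂ν := by simp [integral_map_equiv]

theorem integrable_mul_comp_iff_of_rnDeriv (hνμ : ν.map e.symm ≪ μ)
    (hρ : (fun s => ENNReal.ofReal (ρ s)) =ᵐ[μ] (ν.map e.symm).rnDeriv μ) (hρ0 : 0 ≤ᵐ[μ] ρ)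
    (F : T → ℝ) : Integrable (fun s => ρ s * F (e s)) μ ↔ Integrable F ν := by
  have := e.symm.sigmaFinite_map (μ := ν)
  calc Integrable (fun s => ρ s * F (e s)) μ
      ↔ Integrable (fun s => ((ν.map e.symm).rnDeriv μ s).toReal * F (e s)) μ := by
        refine integrable_congr ?_
        filter_upwards [ae_eq_toReal_rnDeriv_of_ofReal e hρ hρ0] with s hs
        rw [hs]
    _ ↔ Integrable (F ∘ e) (ν.map e.symm) := integrable_toReal_rnDeriv_mul_iff hνμ
    _ ↔ Integrable F ν := by simp [integrable_map_equiv, Function.comp_def]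

end ChangeOfVariables

section Flow

variable {G S : Type*} [AddGroup G] [MeasurableSpace S] {φ : G → S → S}

@[simps]
def flowEquiv (hφ : ∀ t, Measurable (φ t)) (hid : ∀ s, φ 0 s = s)
    (hcomp : ∀ u v s, φ (u + v) s = φ u (φ v s)) (t : G) : S ≃ᵐ S where
  toFun := φ t
  invFun := φ (-t)
  left_inv s := by rw [← hcomp, neg_add_cancel, hid]
  right_inv s := by rw [← hcomp, add_neg_cancel, hid]
  measurable_toFun := hφ t
  measurable_invFun := hφ (-t)

end Flow

theorem stmt19_general {S : Type*} [MeasurableSpace S]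
    (μ : Measure S) [SigmaFinite μ] (d : ℕ)
    (φ : (Fin d → ℝ) → S → S)
    (hφjoint : Measurable fun p : (Fin d → ℝ) × S => φ p.1 p.2)
    (hid : ∀ s, φ 0 s = s)
    (hcomp : ∀ u v s, φ (u + v) s = φ u (φ v s))
    (hns : ∀ t, μ.map (φ t) ≪ μ ∧ μ ≪ μ.map (φ t))
    (w : (Fin d → ℝ) → S → ℝ)
    (hwpos : ∀ t s, 0 < w t s)
    (hwver : ∀ t, (fun s => ENNReal.ofReal (w t s)) =ᵐ[μ] (μ.map (φ (-t))).rnDeriv μ)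
    (hwcoc : ∀ t h : Fin d → ℝ, ∀ s, w (t + h) s = w h s * w t (φ h s))
    (h : S → ℝ) (hint : Integrable h μ) (hpos : ∀ s, 0 ≤ h s)
    (R : (Fin d → ℝ) → ℝ)
    (hR : ∀ t, R t = ∫ s, min (w t s * h (φ t s)) (h s) ∂μ) :
    ∀ (n : ℕ) (t : Fin n → (Fin d → ℝ)) (c : Fin n → ℝ),
      0 ≤ ∑ i, ∑ j, c i * c j * R (t i - t j) := by
  intro n t c
  have hφ : ∀ u, Measurable (φ u) := fun u => hφjoint.comp (measurable_const.prodMk measurable_id)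
  let e := flowEquiv hφ hid hcomp
  have hw0 : ∀ u, 0 ≤ᵐ[μ] w u := fun u => ae_of_all _ fun s => (hwpos u s).le
  have hU : ∀ u, Integrable (fun s => w u s * h (φ u s)) μ := fun u =>
    (integrable_mul_comp_iff_of_rnDeriv (e u) (hns (-u)).1 (hwver u) (hw0 u) h).2 hint
  have hRij : ∀ i j, R (t i - t j)
      = ∫ s, min (w (t i) s * h (φ (t i) s)) (w (t j) s * h (φ (t j) s)) ∂μ := by
    intro i j
    rw [hR, ← integral_mul_comp_of_rnDeriv (e (t j)) (hns (-t j)).1 (hwver (t j)) (hw0 (t j))]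
    refine integral_congr_ae (ae_of_all _ fun s => ?_)
    have hflow : φ (t i - t j) (φ (t j) s) = φ (t i) s := by rw [← hcomp, sub_add_cancel]
    have hcocycle : w (t j) s * w (t i - t j) (φ (t j) s) = w (t i) s := by
      rw [← hwcoc, sub_add_cancel]
    simp only [e, flowEquiv_apply]
    rw [mul_min_of_nonneg _ _ (hwpos (t j) s).le, ← mul_assoc, hcocycle, hflow]
  simp only [hRij]
  exact sum_mul_integral_min_nonneg _
    (fun i => ae_of_all _ fun s => mul_nonneg (hwpos _ s).le (hpos _)) (fun i => hU (t i)) c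

/-- For a nonsingular jointly measurable `ℝ^d`-action with Radon–Nikodym
cocycle `w`, and `h ∈ L¹(μ)` nonnegative, the function
`R(t) = ∫ min((U_t h)(s), h(s)) dμ(s)` with `U_t h = w(t,·)·(h∘φ_t)` is such that
`(t,τ) ↦ R(t−τ)` is nonnegative definite on `ℝ^d × ℝ^d`. -/
theorem stmt19 {S : Type*} [MeasurableSpace S] [StandardBorelSpace S]
    (μ : Measure S) [SigmaFinite μ] (d : ℕ)
    (φ : (Fin d → ℝ) → S → S)
    (hφjoint : Measurable fun p : (Fin d → ℝ) × S => φ p.1 p.2)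
    (hid : ∀ s, φ 0 s = s)
    (hcomp : ∀ u v s, φ (u + v) s = φ u (φ v s))
    (hns : ∀ t, μ.map (φ t) ≪ μ ∧ μ ≪ μ.map (φ t))
    (w : (Fin d → ℝ) → S → ℝ)
    (hwjoint : Measurable fun p : (Fin d → ℝ) × S => w p.1 p.2)
    (hwpos : ∀ t s, 0 < w t s)
    (hwver : ∀ t, (fun s => ENNReal.ofReal (w t s)) =ᵐ[μ] (μ.map (φ (-t))).rnDeriv μ)
    (hwcoc : ∀ t h : Fin d → ℝ, ∀ s, w (t + h) s = w h s * w t (φ h s))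
    (h : S → ℝ) (hint : Integrable h μ) (hpos : ∀ s, 0 ≤ h s)
    (R : (Fin d → ℝ) → ℝ)
    (hR : ∀ t, R t = ∫ s, min (w t s * h (φ t s)) (h s) ∂μ) :
    ∀ (n : ℕ) (t : Fin n → (Fin d → ℝ)) (c : Fin n → ℝ),
      0 ≤ ∑ i, ∑ j, c i * c j * R (t i - t j) :=
  stmt19_general μ d φ hφjoint hid hcomp hns w hwpos hwver hwcoc h hint hpos R hR
end
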